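/- arXiv:1401.7053 — 5 statements merged into one kernel-verified Lean document; each statement's English description precedes it below -/
import Mathlib

section
/- If f ∈ D(δ_1), so that f(z) = f(1) + (z-1)g(z) with g ∈ H²(𝔻), then the radial limit lim_{r→1⁻} f(r) exists and equals f(1). -/
open Complex MeasureTheory Metric Set Filter
open scoped ENNReal Topology

set_option maxHeartbeats 1600000

noncomputable section

/-- The open unit disc in `ℂ`. -/
def oDisc : Set ℂ := Metric.ball 0 1

/-- Squared `H²` norm (extended-real valued):
`sup_{0<r<1} (1/2π) ∫₀^{2π} ‖f(r e^{it})‖² dt`. -/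
def h2E (f : ℂ → ℂ) : ℝ≥0∞ :=
  ⨆ r : Set.Ioo (0:ℝ) 1,
    ENNReal.ofReal ((2 * Real.pi)⁻¹ * ∫ t in (0:ℝ)..(2 * Real.pi),
      ‖f ((r.1 : ℂ) * Complex.exp ((t : ℂ) * Complex.I))‖ ^ 2)

/-- Membership in the Hardy space `H²(𝔻)`. -/
def MemH2 (f : ℂ → ℂ) : Prop := DifferentiableOn ℂ f oDisc ∧ h2E f < ⊤

/-- Squared `H²` norm, real valued. -/
def h2normSq (f : ℂ → ℂ) : ℝ := (h2E f).toReal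

/-- Membership in the Dirichlet-type space `D(δ_ζ)`:
`f` admits a decomposition `f = c + (z-ζ) g` with `g ∈ H²`. -/
def MemD (ζ : ℂ) (f : ℂ → ℂ) : Prop :=
  ∃ c : ℂ, ∃ g : ℂ → ℂ, MemH2 g ∧ ∀ z ∈ oDisc, f z = c + (z - ζ) * g z

open scoped Classical in
/-- The local Dirichlet integral of `h` at `ζ` (extended-real valued): the squared `H²`
norm of `(h - h(ζ))/(z-ζ)` when such a decomposition exists, `⊤` otherwise. -/
def Dloc (ζ : ℂ) (h : ℂ → ℂ) : ℝ≥0∞ :=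
  if hd : ∃ p : ℂ × (ℂ → ℂ), MemH2 p.2 ∧ ∀ z ∈ oDisc, h z = p.1 + (z - ζ) * p.2 z
  then h2E hd.choose.2 else ⊤

namespace RadialAux

open intervalIntegral

/-- Orthogonality of characters on `[0, 2π]`. -/
lemma orth {k : ℤ} (hk : k ≠ 0) :
    (∫ t in (0:ℝ)..(2 * Real.pi), Complex.exp ((k : ℂ) * I * (t : ℂ))) = 0 := by
  have hc : (k : ℂ) * I ≠ 0 := by
    simp [Complex.I_ne_zero, hk]
  rw [integral_exp_mul_complex hc]
  have h1 : Complex.exp ((k:ℂ) * I * ((2 * Real.pi : ℝ) : ℂ)) = 1 := by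
    rw [show (k:ℂ) * I * ((2 * Real.pi : ℝ) : ℂ) = (k:ℂ) * (2 * (Real.pi:ℂ) * I) by
      push_cast; ring]
    exact_mod_cast Complex.exp_int_mul_two_pi_mul_I k
  rw [h1]
  simp

/-- `∫₀^{2π} e^{i(k-l)t} dt`. -/
lemma exp_int (k l : ℕ) :
    (∫ t in (0:ℝ)..(2 * Real.pi), Complex.exp (((k:ℂ) - (l:ℂ)) * (t:ℂ) * I))
    = if l = k then ((2 * Real.pi : ℝ) : ℂ) else 0 := by
  by_cases h : l = k
  · subst h
    rw [if_pos rfl]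
    have h0 : ∀ t : ℝ, Complex.exp (((l:ℂ) - (l:ℂ)) * (t:ℂ) * I) = 1 := by
      intro t
      rw [show ((l:ℂ) - (l:ℂ)) = 0 by ring, zero_mul, zero_mul, Complex.exp_zero]
    rw [intervalIntegral.integral_congr (fun t _ => h0 t)]
    rw [intervalIntegral.integral_const, sub_zero, Complex.real_smul, mul_one]
  · rw [if_neg h]
    have hk : ((k:ℤ) - (l:ℤ)) ≠ 0 := by
      intro hc
      apply h
      omega
    calc (∫ t in (0:ℝ)..(2 * Real.pi), Complex.exp (((k:ℂ) - (l:ℂ)) * (t:ℂ) * I))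
        = ∫ t in (0:ℝ)..(2 * Real.pi),
            Complex.exp (((((k:ℤ) - (l:ℤ) : ℤ)):ℂ) * I * (t:ℂ)) := by
          apply intervalIntegral.integral_congr
          intro t _
          exact congrArg Complex.exp (by push_cast; ring)
      _ = 0 := orth hk

/-- Orthogonality computation for trigonometric polynomials. -/
lemma trig_int (N : ℕ) (a : ℕ → ℂ) :
    (∫ t in (0:ℝ)..(2 * Real.pi),
      (∑ n ∈ Finset.range N, a n * Complex.exp (-(n:ℂ) * (t:ℂ) * I)) *
        (starRingEnd ℂ) (∑ m ∈ Finset.range N, a m * Complex.exp (-(m:ℂ) * (t:ℂ) * I)))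
    = ((2 * Real.pi : ℝ) : ℂ) * ∑ n ∈ Finset.range N, a n * (starRingEnd ℂ) (a n) := by
  have hexp : ∀ t : ℝ,
      (∑ n ∈ Finset.range N, a n * Complex.exp (-(n:ℂ) * (t:ℂ) * I)) *
        (starRingEnd ℂ) (∑ m ∈ Finset.range N, a m * Complex.exp (-(m:ℂ) * (t:ℂ) * I))
      = ∑ n ∈ Finset.range N, ∑ m ∈ Finset.range N,
          (a n * (starRingEnd ℂ) (a m)) * Complex.exp (((m:ℂ) - (n:ℂ)) * (t:ℂ) * I) := by
    intro t
    rw [map_sum, Finset.sum_mul_sum]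
    refine Finset.sum_congr rfl fun n _ => Finset.sum_congr rfl fun m _ => ?_
    have hce : (starRingEnd ℂ) (Complex.exp (-(m:ℂ) * (t:ℂ) * I))
        = Complex.exp ((m:ℂ) * (t:ℂ) * I) := by
      rw [← Complex.exp_conj]
      congr 1
      simp only [map_mul, map_neg, Complex.conj_ofReal, Complex.conj_I, Complex.conj_natCast]
      ring
    have hee : Complex.exp (-(n:ℂ) * (t:ℂ) * I) * Complex.exp ((m:ℂ) * (t:ℂ) * I)
        = Complex.exp (((m:ℂ) - (n:ℂ)) * (t:ℂ) * I) := by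
      rw [← Complex.exp_add]; congr 1; ring
    rw [map_mul, hce, ← hee]
    ring
  rw [intervalIntegral.integral_congr (fun t _ => hexp t)]
  rw [intervalIntegral.integral_finset_sum]
  swap
  · intro n _
    apply Continuous.intervalIntegrable
    apply continuous_finset_sum
    intro m _
    exact continuous_const.mul (Complex.continuous_exp.comp
      ((continuous_const.mul Complex.continuous_ofReal).mul continuous_const))
  have hinner : ∀ n ∈ Finset.range N,
      (∫ t in (0:ℝ)..(2 * Real.pi), ∑ m ∈ Finset.range N,
        (a n * (starRingEnd ℂ) (a m)) * Complex.exp (((m:ℂ) - (n:ℂ)) * (t:ℂ) * I))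
      = ((2 * Real.pi : ℝ) : ℂ) * (a n * (starRingEnd ℂ) (a n)) := by
    intro n hn
    rw [intervalIntegral.integral_finset_sum]
    swap
    · intro m _
      apply Continuous.intervalIntegrable
      exact continuous_const.mul (Complex.continuous_exp.comp
        ((continuous_const.mul Complex.continuous_ofReal).mul continuous_const))
    rw [Finset.sum_eq_single_of_mem n hn]
    · rw [intervalIntegral.integral_const_mul, exp_int n n, if_pos rfl]
      ring
    · intro m _ hmn
      rw [intervalIntegral.integral_const_mul, exp_int m n,
        if_neg (fun hc => hmn hc.symm), mul_zero]
  rw [Finset.sum_congr rfl hinner, ← Finset.mul_sum]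

/-- The circle `L²` bound implied by `h2E`. -/
lemma circL2 {g : ℂ → ℂ} (hg : h2E g < ⊤) {s : ℝ} (hs : s ∈ Set.Ioo (0:ℝ) 1) :
    ∫ t in (0:ℝ)..(2 * Real.pi), ‖g ((s:ℂ) * Complex.exp ((t:ℂ) * I))‖ ^ 2
      ≤ 2 * Real.pi * (h2E g).toReal := by
  set X := (2 * Real.pi)⁻¹ * ∫ t in (0:ℝ)..(2 * Real.pi),
      ‖g ((s:ℂ) * Complex.exp ((t:ℂ) * I))‖ ^ 2 with hX
  have hX0 : 0 ≤ X := by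
    apply mul_nonneg (by positivity)
    exact intervalIntegral.integral_nonneg Real.two_pi_pos.le (fun t _ => by positivity)
  have hle : ENNReal.ofReal X ≤ h2E g := by
    exact le_iSup (fun q : Set.Ioo (0:ℝ) 1 =>
      ENNReal.ofReal ((2 * Real.pi)⁻¹ * ∫ t in (0:ℝ)..(2 * Real.pi),
        ‖g ((q.1 : ℂ) * Complex.exp ((t : ℂ) * Complex.I))‖ ^ 2)) ⟨s, hs⟩
  have h2 : X ≤ (h2E g).toReal := by
    have := ENNReal.toReal_mono hg.ne hle
    rwa [ENNReal.toReal_ofReal hX0] at this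
  have hπ := Real.pi_pos
  rw [hX] at h2
  have h3 := mul_le_mul_of_nonneg_left h2 (by positivity : (0:ℝ) ≤ 2 * Real.pi)
  have h4 : 2 * Real.pi * ((2 * Real.pi)⁻¹ * ∫ t in (0:ℝ)..(2 * Real.pi),
      ‖g ((s:ℂ) * Complex.exp ((t:ℂ) * I))‖ ^ 2)
      = ∫ t in (0:ℝ)..(2 * Real.pi), ‖g ((s:ℂ) * Complex.exp ((t:ℂ) * I))‖ ^ 2 := by
    rw [← mul_assoc, mul_inv_cancel₀ (by positivity), one_mul]
  rw [h4] at h3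
  linarith

end RadialAux

/-- Key pointwise growth estimate for `H²` functions. -/
lemma h2_growth {g : ℂ → ℂ} (hg : MemH2 g) {r : ℝ} (hr0 : 0 < r) (hr1 : r < 1) :
    ‖g (r : ℂ)‖ ≤ Real.sqrt ((h2E g).toReal + 1) / Real.sqrt (1 - r) := by
  have hπ := Real.pi_pos
  set Msq := (h2E g).toReal with hMsq
  have hMsq0 : 0 ≤ Msq := ENNReal.toReal_nonneg
  set s := Real.sqrt r with hsdef
  have hs0 : 0 < s := Real.sqrt_pos.2 hr0
  have hss : s * s = r := Real.mul_self_sqrt hr0.le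
  have hs1 : s < 1 := by nlinarith
  have hrs : r < s := by nlinarith
  -- differentiability / continuity facts
  have hopen : ∀ z : ℂ, ‖z‖ ≤ s → DifferentiableAt ℂ g z := by
    intro z hz
    have hz1 : z ∈ oDisc := by
      simp only [oDisc, mem_ball_zero_iff]
      exact hz.trans_lt hs1
    have ho : IsOpen oDisc := by simp only [oDisc]; exact isOpen_ball
    exact hg.1.differentiableAt (ho.mem_nhds hz1)
  have hmap : ∀ t : ℝ, ‖(s:ℂ) * Complex.exp ((t:ℂ) * I)‖ ≤ s := by
    intro t
    rw [norm_mul]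
    rw [Complex.norm_exp_ofReal_mul_I]
    simp [abs_of_pos hs0]
  set G : ℝ → ℂ := fun t => g ((s:ℂ) * Complex.exp ((t:ℂ) * I)) with hGdef
  have hGc : Continuous G := by
    rw [continuous_iff_continuousAt]
    intro t
    have hc2 : ContinuousAt (fun t : ℝ => (s:ℂ) * Complex.exp ((t:ℂ) * I)) t :=
      (continuous_const.mul (Complex.continuous_exp.comp
        (Complex.continuous_ofReal.mul continuous_const))).continuousAt
    exact ContinuousAt.comp (g := g)
      (f := fun t : ℝ => (s:ℂ) * Complex.exp ((t:ℂ) * I))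
      (hopen _ (hmap t)).continuousAt hc2
  -- the power series
  have hd : DifferentiableOn ℂ g (closedBall (0:ℂ) s) := fun z hz =>
    (hopen z (by simpa [mem_closedBall_zero_iff] using hz)).differentiableWithinAt
  obtain ⟨R, hR⟩ : ∃ R : NNReal, (R : ℝ) = s := ⟨⟨s, hs0.le⟩, rfl⟩
  have hR0 : 0 < R := by rw [← NNReal.coe_pos, hR]; exact hs0
  have hps : HasFPowerSeriesOnBall g (cauchyPowerSeries g 0 s) 0 (R : ℝ≥0∞) := by
    have h := DifferentiableOn.hasFPowerSeriesOnBall (c := (0:ℂ)) (f := g) (R := R)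
      (by rw [hR]; exact hd) hR0
    rwa [hR] at h
  have hy : (r:ℂ) ∈ Metric.eball (0:ℂ) (R : ℝ≥0∞) := by
    rw [mem_eball_zero_iff]
    refine ENNReal.coe_lt_coe.2 ?_
    rw [← NNReal.coe_lt_coe, coe_nnnorm, hR]
    simpa [abs_of_pos hr0] using hrs
  have hsum : HasSum (fun n => cauchyPowerSeries g 0 s n fun _ => (r:ℂ)) (g (r:ℂ)) := by
    have h := hps.hasSum hy
    simpa using h
  -- coefficients
  set J : ℕ → ℂ := fun n => ∫ t in (0:ℝ)..(2 * Real.pi),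
      (s:ℂ)^n * Complex.exp (-(n:ℂ) * (t:ℂ) * I) * G t with hJdef
  have hcoef : ∀ n, (cauchyPowerSeries g 0 s n fun _ => (r:ℂ))
      = (2 * (Real.pi:ℂ))⁻¹ * J n := by
    intro n
    rw [cauchyPowerSeries_apply]
    have hstep : (∮ z in C(0, s), ((r:ℂ) / (z - 0)) ^ n • (z - 0)⁻¹ • g z) = I * J n := by
      have hrfl : (∮ z in C(0, s), ((r:ℂ) / (z - 0)) ^ n • (z - 0)⁻¹ • g z)
          = ∫ θ in (0:ℝ)..(2 * Real.pi), deriv (circleMap 0 s) θ •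
            (((r:ℂ) / (circleMap 0 s θ - 0)) ^ n • (circleMap 0 s θ - 0)⁻¹ •
              g (circleMap 0 s θ)) := rfl
      rw [hrfl, ← intervalIntegral.integral_const_mul]
      apply intervalIntegral.integral_congr
      intro θ _
      dsimp only
      have hz : ((s:ℂ) * Complex.exp ((θ:ℂ) * I)) ≠ 0 := by
        apply mul_ne_zero
        · exact_mod_cast hs0.ne'
        · exact Complex.exp_ne_zero _
      have he : Complex.exp (-(n:ℂ) * (θ:ℂ) * I) * (Complex.exp ((θ:ℂ) * I)) ^ n = 1 := by
        rw [← Complex.exp_nat_mul, ← Complex.exp_add,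
          show -(n:ℂ) * (θ:ℂ) * I + (n:ℂ) * ((θ:ℂ) * I) = 0 by ring, Complex.exp_zero]
      have hcm : circleMap 0 s θ = (s:ℂ) * Complex.exp ((θ:ℂ) * I) := circleMap_zero s θ
      rw [deriv_circleMap, hcm]
      simp only [sub_zero, smul_eq_mul, circleMap_zero]
      have hrr : (r:ℂ) = (s:ℂ) * (s:ℂ) := by
        rw [← hss]; push_cast; ring
      have hfrac : (r:ℂ) / ((s:ℂ) * Complex.exp ((θ:ℂ) * I))
          = (s:ℂ) * Complex.exp (-(θ:ℂ) * I) := by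
        rw [div_eq_iff hz, hrr]
        have hone : Complex.exp (-(θ:ℂ) * I) * Complex.exp ((θ:ℂ) * I) = 1 := by
          rw [← Complex.exp_add, show -(θ:ℂ) * I + (θ:ℂ) * I = 0 by ring, Complex.exp_zero]
        calc (s:ℂ) * (s:ℂ)
            = (s:ℂ) * (s:ℂ) * (Complex.exp (-(θ:ℂ) * I) * Complex.exp ((θ:ℂ) * I)) := by
              rw [hone, mul_one]
          _ = (s:ℂ) * Complex.exp (-(θ:ℂ) * I) * ((s:ℂ) * Complex.exp ((θ:ℂ) * I)) := by
              ring
      rw [hfrac, mul_pow, ← Complex.exp_nat_mul]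
      have hexp2 : Complex.exp ((n:ℂ) * (-(θ:ℂ) * I)) = Complex.exp (-(n:ℂ) * (θ:ℂ) * I) := by
        congr 1; ring
      rw [hexp2]
      have hs' : (s:ℂ) ≠ 0 := by exact_mod_cast hs0.ne'
      field_simp
      ring
    rw [hstep]
    have hIpi : (2 * ↑Real.pi * I)⁻¹ • (I * J n) = (2 * (Real.pi:ℂ))⁻¹ * J n := by
      rw [smul_eq_mul]
      have : (Real.pi : ℂ) ≠ 0 := by exact_mod_cast Real.pi_ne_zero
      field_simp
    exact hIpi
  -- bounds
  set σ := Real.sqrt (Msq + 1) with hσdef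
  set τ := Real.sqrt (1 - r) with hτdef
  have hσ0 : 0 < σ := Real.sqrt_pos.2 (by linarith)
  have hτ0 : 0 < τ := Real.sqrt_pos.2 (by linarith)
  have hσ2 : σ * σ = Msq + 1 := Real.mul_self_sqrt (by linarith)
  have hτ2 : τ * τ = 1 - r := Real.mul_self_sqrt (by linarith)
  have hA : ∫ t in (0:ℝ)..(2 * Real.pi), ‖G t‖ ^ 2 ≤ 2 * Real.pi * Msq :=
    RadialAux.circL2 hg.2 ⟨hs0, hs1⟩
  have hkey : ∀ N : ℕ, ∑ n ∈ Finset.range N, ‖(2 * (Real.pi:ℂ))⁻¹ * J n‖ ≤ σ / τ := by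
    intro N
    classical
    set u : ℕ → ℂ := fun n => if J n = 0 then 1 else (starRingEnd ℂ) (J n) / ‖J n‖ with hu
    have hu1 : ∀ n, ‖u n‖ = 1 := by
      intro n
      rw [hu]
      by_cases h : J n = 0
      · simp [h]
      · simp only [if_neg h, norm_div, RCLike.norm_conj, Complex.norm_real, Real.norm_eq_abs,
          abs_norm]
        exact div_self (norm_ne_zero_iff.2 h)
    have huu : ∀ n, u n * (starRingEnd ℂ) (u n) = 1 := by
      intro n
      rw [Complex.mul_conj, Complex.normSq_eq_norm_sq, hu1]
      norm_num
    have huJ : ∀ n, u n * J n = ((‖J n‖ : ℝ) : ℂ) := by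
      intro n
      rw [hu]
      by_cases h : J n = 0
      · simp [h]
      · simp only [if_neg h]
        have h3 : ((‖J n‖ : ℝ) : ℂ) ≠ 0 := by
          exact_mod_cast norm_ne_zero_iff.2 h
        rw [div_mul_eq_mul_div, div_eq_iff h3, mul_comm ((starRingEnd ℂ) (J n)) (J n),
          Complex.mul_conj, Complex.normSq_eq_norm_sq]
        push_cast
        ring
    set P : ℝ → ℂ := fun t => ∑ n ∈ Finset.range N,
        u n * (s:ℂ)^n * Complex.exp (-(n:ℂ) * (t:ℂ) * I) with hP
    have hecont : ∀ n : ℕ, Continuous fun t : ℝ => Complex.exp (-(n:ℂ) * (t:ℂ) * I) := by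
      intro n
      exact Complex.continuous_exp.comp
        (((continuous_const.mul Complex.continuous_ofReal).mul continuous_const))
    have hPc : Continuous P := by
      apply continuous_finset_sum
      intro n _
      exact continuous_const.mul (hecont n)
    -- ∫ P G = Σ ‖J n‖
    have hPG : (∫ t in (0:ℝ)..(2 * Real.pi), P t * G t)
        = (((∑ n ∈ Finset.range N, ‖J n‖ : ℝ)) : ℂ) := by
      have h1 : ∀ t : ℝ, P t * G t = ∑ n ∈ Finset.range N,
          u n * ((s:ℂ)^n * Complex.exp (-(n:ℂ) * (t:ℂ) * I) * G t) := by
        intro t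
        rw [hP, Finset.sum_mul]
        apply Finset.sum_congr rfl
        intros; ring
      rw [intervalIntegral.integral_congr (fun t _ => h1 t)]
      rw [intervalIntegral.integral_finset_sum]
      · push_cast
        apply Finset.sum_congr rfl
        intro n _
        rw [intervalIntegral.integral_const_mul]
        rw [show (∫ t in (0:ℝ)..(2 * Real.pi),
            (s:ℂ)^n * Complex.exp (-(n:ℂ) * (t:ℂ) * I) * G t) = J n from rfl]
        rw [huJ n]
      · intro n _
        exact (continuous_const.mul (((continuous_const.mul (hecont n))).mul hGc)).intervalIntegrable _ _
    -- ∫ |P|² = 2π Σ rⁿ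
    have hPP : (∫ t in (0:ℝ)..(2 * Real.pi), ‖P t‖ ^ 2)
        = 2 * Real.pi * ∑ n ∈ Finset.range N, r ^ n := by
      have hconj : ∀ t : ℝ, ((((‖P t‖ ^ 2 : ℝ)) : ℂ)) = P t * (starRingEnd ℂ) (P t) := by
        intro t
        rw [Complex.mul_conj, Complex.normSq_eq_norm_sq]
      have h1 : (∫ t in (0:ℝ)..(2 * Real.pi), P t * (starRingEnd ℂ) (P t))
          = ((2 * Real.pi : ℝ) : ℂ) * ∑ n ∈ Finset.range N,
              (u n * (s:ℂ)^n) * (starRingEnd ℂ) (u n * (s:ℂ)^n) := by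
        simp only [hP]
        exact RadialAux.trig_int N (fun n => u n * (s:ℂ)^n)
      have hdiag : ∑ n ∈ Finset.range N, (u n * (s:ℂ)^n) * (starRingEnd ℂ) (u n * (s:ℂ)^n)
          = ((∑ n ∈ Finset.range N, r ^ n : ℝ) : ℂ) := by
        push_cast
        refine Finset.sum_congr rfl fun n _ => ?_
        rw [map_mul, map_pow, Complex.conj_ofReal]
        have hsr : ((s:ℂ))^n * ((s:ℂ))^n = ((r:ℂ))^n := by
          rw [← mul_pow]
          congr 1
          rw [← hss]; push_cast; ring
        calc u n * (s:ℂ)^n * ((starRingEnd ℂ) (u n) * (s:ℂ)^n)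
            = (u n * (starRingEnd ℂ) (u n)) * ((s:ℂ)^n * (s:ℂ)^n) := by ring
          _ = (r:ℂ)^n := by rw [huu n, hsr, one_mul]
      have h2 : (((∫ t in (0:ℝ)..(2 * Real.pi), ‖P t‖ ^ 2 : ℝ)) : ℂ)
          = (((2 * Real.pi * ∑ n ∈ Finset.range N, r ^ n : ℝ)) : ℂ) := by
        rw [← intervalIntegral.integral_ofReal]
        rw [intervalIntegral.integral_congr (fun t _ => hconj t), h1, hdiag]
        push_cast
        ring
      exact_mod_cast h2
    -- geometric bound
    have h1r : (0:ℝ) < 1 - r := by linarith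
    have hgeom : ∑ n ∈ Finset.range N, r ^ n ≤ 1 / (1 - r) := by
      rw [geom_sum_eq hr1.ne]
      have e : (1 - r ^ N) / (1 - r) = (r ^ N - 1) / (r - 1) := by
        rw [show (1:ℝ) - r ^ N = -(r ^ N - 1) by ring, show (1:ℝ) - r = -(r - 1) by ring,
          neg_div_neg_eq]
      rw [← e]
      gcongr
      · nlinarith [pow_nonneg hr0.le N]
    -- Cauchy-Schwarz via AM-GM
    set ε1 := (σ * τ)⁻¹ with hε1
    set ε2 := σ * τ with hε2
    have hε10 : 0 < ε1 := by positivity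
    have hε20 : 0 < ε2 := by positivity
    have hε12 : ε1 * ε2 = 1 := inv_mul_cancel₀ (by positivity)
    have e1 : ε2 * (ε1 * ε1) = ε1 := by
      rw [show ε2 * (ε1 * ε1) = (ε1 * ε2) * ε1 from by ring, hε12, one_mul]
    have hpt : ∀ t ∈ Set.Icc (0:ℝ) (2 * Real.pi),
        ‖P t * G t‖ ≤ ε1/2 * ‖G t‖^2 + ε2/2 * ‖P t‖^2 := by
      intro t _
      rw [norm_mul]
      have key0 : ε2 * (ε1 * ‖G t‖ - ‖P t‖)^2
          = ε1 * ‖G t‖^2 - 2 * (‖G t‖ * ‖P t‖) + ε2 * ‖P t‖^2 := by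
        have : ε2 * (ε1 * ‖G t‖ - ‖P t‖)^2
            = (ε2 * (ε1 * ε1)) * ‖G t‖^2 - 2 * (ε1 * ε2) * (‖G t‖ * ‖P t‖)
              + ε2 * ‖P t‖^2 := by ring
        rw [this, e1, hε12]
        ring
      have hpos : 0 ≤ ε2 * (ε1 * ‖G t‖ - ‖P t‖)^2 := by positivity
      rw [key0] at hpos
      linarith
    have hintPGle : ‖∫ t in (0:ℝ)..(2 * Real.pi), P t * G t‖
        ≤ ∫ t in (0:ℝ)..(2 * Real.pi), (ε1/2 * ‖G t‖^2 + ε2/2 * ‖P t‖^2) := by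
      refine (intervalIntegral.norm_integral_le_integral_norm Real.two_pi_pos.le).trans ?_
      apply intervalIntegral.integral_mono_on Real.two_pi_pos.le ?_ ?_ hpt
      · exact ((hPc.mul hGc).norm).intervalIntegrable _ _
      · exact ((continuous_const.mul ((hGc.norm).pow 2)).add
          (continuous_const.mul ((hPc.norm).pow 2))).intervalIntegrable _ _
    have hsplit : ∫ t in (0:ℝ)..(2 * Real.pi), (ε1/2 * ‖G t‖^2 + ε2/2 * ‖P t‖^2)
        = ε1/2 * (∫ t in (0:ℝ)..(2 * Real.pi), ‖G t‖^2)
          + ε2/2 * (∫ t in (0:ℝ)..(2 * Real.pi), ‖P t‖^2) := by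
      rw [intervalIntegral.integral_add (f := fun t => ε1/2 * ‖G t‖^2) (g := fun t => ε2/2 * ‖P t‖^2) ((continuous_const.mul
          ((hGc.norm).pow 2)).intervalIntegrable _ _)
          ((continuous_const.mul ((hPc.norm).pow 2)).intervalIntegrable _ _),
        intervalIntegral.integral_const_mul, intervalIntegral.integral_const_mul]
    have hSNnorm : (∑ n ∈ Finset.range N, ‖J n‖)
        = ‖∫ t in (0:ℝ)..(2 * Real.pi), P t * G t‖ := by
      rw [hPG, Complex.norm_real]
      exact (Real.norm_of_nonneg (Finset.sum_nonneg fun n _ => norm_nonneg _)).symm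
    have hSN : (∑ n ∈ Finset.range N, ‖J n‖)
        ≤ ε1/2 * (2 * Real.pi * Msq) + ε2/2 * (2 * Real.pi * (1/(1-r))) := by
      rw [hSNnorm]
      refine (hintPGle.trans_eq hsplit).trans ?_
      have hB : (∫ t in (0:ℝ)..(2 * Real.pi), ‖P t‖^2) ≤ 2 * Real.pi * (1/(1-r)) := by
        rw [hPP]
        have := mul_le_mul_of_nonneg_left hgeom (by positivity : (0:ℝ) ≤ 2 * Real.pi)
        linarith
      have h1 := mul_le_mul_of_nonneg_left hA (by positivity : (0:ℝ) ≤ ε1/2)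
      have h2 := mul_le_mul_of_nonneg_left hB (by positivity : (0:ℝ) ≤ ε2/2)
      linarith
    have hnorm2 : ∀ n, ‖(2 * (Real.pi:ℂ))⁻¹ * J n‖ = (2 * Real.pi)⁻¹ * ‖J n‖ := by
      intro n
      rw [norm_mul, norm_inv]
      congr 2
      rw [show (2 * (Real.pi:ℂ)) = ((2 * Real.pi : ℝ) : ℂ) by push_cast; ring,
        Complex.norm_real, Real.norm_of_nonneg (by positivity)]
    calc ∑ n ∈ Finset.range N, ‖(2 * (Real.pi:ℂ))⁻¹ * J n‖
        = (2 * Real.pi)⁻¹ * ∑ n ∈ Finset.range N, ‖J n‖ := by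
          rw [Finset.mul_sum]
          exact Finset.sum_congr rfl fun n _ => hnorm2 n
      _ ≤ (2 * Real.pi)⁻¹ * (ε1/2 * (2 * Real.pi * Msq) + ε2/2 * (2 * Real.pi * (1/(1-r)))) := by
          apply mul_le_mul_of_nonneg_left hSN (by positivity)
      _ = ε1/2 * Msq + ε2/2 * (1/(1-r)) := by
          field_simp
      _ ≤ σ / τ := by
          have he1' : ε1 = (σ * τ)⁻¹ := by rw [hε1, hε2]
          rw [he1', hε2, show (1:ℝ) - r = τ * τ from hτ2.symm]
          have hMσ : Msq ≤ σ * σ := by nlinarith [hσ2]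
          have hσne : σ ≠ 0 := ne_of_gt hσ0
          have hτne : τ ≠ 0 := ne_of_gt hτ0
          calc (σ * τ)⁻¹/2 * Msq + (σ * τ)/2 * (1/(τ * τ))
              ≤ (σ * τ)⁻¹/2 * (σ * σ) + (σ * τ)/2 * (1/(τ * τ)) := by gcongr
            _ = σ / τ := by field_simp; ring
  -- conclude
  have hsummable : Summable (fun n => ‖(2 * (Real.pi:ℂ))⁻¹ * J n‖) :=
    summable_of_sum_range_le (fun n => norm_nonneg _) hkey
  have hsum' : HasSum (fun n => (2 * (Real.pi:ℂ))⁻¹ * J n) (g (r:ℂ)) := by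
    have h := hsum
    rw [show (fun n => cauchyPowerSeries g 0 s n fun _ => (r:ℂ))
        = fun n => (2 * (Real.pi:ℂ))⁻¹ * J n from funext hcoef] at h
    exact h
  calc ‖g (r:ℂ)‖ = ‖∑' n, (2 * (Real.pi:ℂ))⁻¹ * J n‖ := by rw [hsum'.tsum_eq]
    _ ≤ ∑' n, ‖(2 * (Real.pi:ℂ))⁻¹ * J n‖ := norm_tsum_le_tsum_norm hsummable
    _ ≤ σ / τ := Summable.tsum_le_of_sum_range_le hsummable hkey

/-- If `f ∈ D(δ_1)`, i.e. `f = c + (z-1) g` with `g ∈ H²`, then the radial limit of `f`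
at `1` exists and equals `c = f(1)`. -/
theorem stmt1 (f g : ℂ → ℂ) (c : ℂ) (hg : MemH2 g)
    (hdec : ∀ z ∈ oDisc, f z = c + (z - 1) * g z) :
    Filter.Tendsto (fun r : ℝ => f (r : ℂ)) (𝓝[<] (1 : ℝ)) (𝓝 c) := by
  have hM0 : 0 ≤ (h2E g).toReal := ENNReal.toReal_nonneg
  set σ := Real.sqrt ((h2E g).toReal + 1) with hσ
  have hbound : ∀ᶠ r : ℝ in 𝓝[<] (1:ℝ), ‖f (r:ℂ) - c‖ ≤ σ * Real.sqrt (1 - r) := by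
    filter_upwards [Ioo_mem_nhdsLT_of_mem
      (show (1:ℝ) ∈ Set.Ioc (0:ℝ) 1 by norm_num)] with r hr
    obtain ⟨hr0, hr1⟩ := hr
    have hrd : (r:ℂ) ∈ oDisc := by
      simp only [oDisc, mem_ball_zero_iff, Complex.norm_real, Real.norm_eq_abs]
      rw [abs_of_pos hr0]
      exact hr1
    have h1 : f (r:ℂ) - c = ((r:ℂ) - 1) * g (r:ℂ) := by rw [hdec _ hrd]; ring
    rw [h1, norm_mul]
    have h2 : ‖(r:ℂ) - 1‖ = 1 - r := by
      rw [show (r:ℂ) - 1 = ((r - 1 : ℝ) : ℂ) by push_cast; ring,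
        Complex.norm_real, Real.norm_eq_abs, abs_of_nonpos (by linarith)]
      ring
    rw [h2]
    have h3 := h2_growth hg hr0 hr1
    have hτ0 : 0 < Real.sqrt (1 - r) := Real.sqrt_pos.2 (by linarith)
    have hτ2 : Real.sqrt (1 - r) * Real.sqrt (1 - r) = 1 - r :=
      Real.mul_self_sqrt (by linarith)
    calc (1 - r) * ‖g (r:ℂ)‖ ≤ (1 - r) * (σ / Real.sqrt (1 - r)) := by
          exact mul_le_mul_of_nonneg_left h3 (by linarith)
      _ = σ * Real.sqrt (1 - r) := by
          rw [mul_div_assoc', div_eq_iff hτ0.ne', mul_assoc, hτ2]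
          ring
  have hlim : Tendsto (fun r : ℝ => σ * Real.sqrt (1 - r)) (𝓝[<] (1:ℝ)) (𝓝 0) := by
    have h : Tendsto (fun r : ℝ => σ * Real.sqrt (1 - r)) (𝓝 (1:ℝ))
        (𝓝 (σ * Real.sqrt (1 - 1))) :=
      (continuous_const.mul (Real.continuous_sqrt.comp
        (continuous_const.sub continuous_id))).tendsto 1
    simpa using h.mono_left nhdsWithin_le_nhds
  have h0 : Tendsto (fun r : ℝ => f (r:ℂ) - c) (𝓝[<] (1:ℝ)) (𝓝 0) :=
    squeeze_zero_norm' hbound hlim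
  have h1 := h0.add_const c
  simpa using h1
end
end

section
/- Let ζ be a point of the unit circle, φ ∈ H^∞(𝔻), and f ∈ D(δ_ζ) with boundary value f(ζ). Then D_ζ(φf) ≤ 2(‖φ‖_∞² D_ζ(f) + |f(ζ)|² D_ζ(φ)), where D_ζ(h) denotes the local Dirichlet integral of h at ζ (equal to ‖(h - h(ζ))/(z - ζ)‖²_{H²} when finite). -/
open Complex MeasureTheory Metric Set Filter
open scoped ENNReal Topology

noncomputable section

/-! ### Auxiliary lemmas -/


/-- The point on the circle of radius `r` at angle `t`. -/
def cpt (r t : ℝ) : ℂ := (r : ℂ) * Complex.exp ((t : ℂ) * Complex.I)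

/-- The circle mean of `‖f‖²` at radius `r`. -/
def msq (f : ℂ → ℂ) (r : ℝ) : ℝ :=
  (2 * Real.pi)⁻¹ * ∫ t in (0:ℝ)..(2 * Real.pi), ‖f (cpt r t)‖ ^ 2

lemma h2E_eq (f : ℂ → ℂ) :
    h2E f = ⨆ r : Set.Ioo (0:ℝ) 1, ENNReal.ofReal (msq f r.1) := rfl

lemma norm_cpt (r t : ℝ) (hr : 0 ≤ r) : ‖cpt r t‖ = r := by
  simp [cpt, Complex.norm_exp, _root_.abs_of_nonneg hr]

lemma cpt_mem_oDisc {r : ℝ} (t : ℝ) (hr : 0 ≤ r) (hr1 : r < 1) : cpt r t ∈ oDisc := by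
  simp [oDisc, Metric.mem_ball, dist_eq_norm]
  calc ‖cpt r t‖ = r := norm_cpt r t hr
  _ < 1 := hr1

lemma continuous_cpt (r : ℝ) : Continuous fun t : ℝ => cpt r t := by
  unfold cpt; fun_prop

lemma cont_integrand {v : ℂ → ℂ} (hv : ContinuousOn v oDisc) {r : ℝ}
    (hr : 0 ≤ r) (hr1 : r < 1) :
    Continuous fun t : ℝ => ‖v (cpt r t)‖ ^ 2 := by
  have h := hv.comp_continuous (continuous_cpt r) (fun t => cpt_mem_oDisc t hr hr1)
  exact (h.norm).pow 2

lemma msq_nonneg (f : ℂ → ℂ) (r : ℝ) : 0 ≤ msq f r := by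
  apply mul_nonneg (by positivity)
  apply intervalIntegral.integral_nonneg (by positivity)
  intro t _; positivity

lemma ofReal_msq_le_h2E (f : ℂ → ℂ) {r : ℝ} (hr : r ∈ Set.Ioo (0:ℝ) 1) :
    ENNReal.ofReal (msq f r) ≤ h2E f := by
  rw [h2E_eq]
  exact le_iSup (fun p : Set.Ioo (0:ℝ) 1 => ENNReal.ofReal (msq f p.1)) ⟨r, hr⟩

/-- Key comparison lemma. -/
lemma h2E_le {u v w : ℂ → ℂ} {e₁ e₂ : ℝ} (he₁ : 0 ≤ e₁) (he₂ : 0 ≤ e₂)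
    (hu : ContinuousOn u oDisc) (hv : ContinuousOn v oDisc) (hw : ContinuousOn w oDisc)
    (hb : ∀ z ∈ oDisc, ‖u z‖ ^ 2 ≤ e₁ * ‖v z‖ ^ 2 + e₂ * ‖w z‖ ^ 2) :
    h2E u ≤ ENNReal.ofReal e₁ * h2E v + ENNReal.ofReal e₂ * h2E w := by
  rw [h2E_eq u]
  apply iSup_le
  rintro ⟨r, hr0, hr1⟩
  have hπ : (0:ℝ) < 2 * Real.pi := by positivity
  have hiu := (cont_integrand hu hr0.le hr1).intervalIntegrable (μ := volume) 0 (2*Real.pi)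
  have hiv := (cont_integrand hv hr0.le hr1).intervalIntegrable (μ := volume) 0 (2*Real.pi)
  have hiw := (cont_integrand hw hr0.le hr1).intervalIntegrable (μ := volume) 0 (2*Real.pi)
  have key : msq u r ≤ e₁ * msq v r + e₂ * msq w r := by
    unfold msq
    have hint : (∫ t in (0:ℝ)..(2 * Real.pi), ‖u (cpt r t)‖ ^ 2)
        ≤ ∫ t in (0:ℝ)..(2 * Real.pi), (e₁ * ‖v (cpt r t)‖ ^ 2 + e₂ * ‖w (cpt r t)‖ ^ 2) := by
      apply intervalIntegral.integral_mono_on hπ.le hiu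
        ((hiv.const_mul e₁).add (hiw.const_mul e₂))
      intro t _
      exact hb _ (cpt_mem_oDisc t hr0.le hr1)
    have hsplit : (∫ t in (0:ℝ)..(2 * Real.pi),
          (e₁ * ‖v (cpt r t)‖ ^ 2 + e₂ * ‖w (cpt r t)‖ ^ 2))
        = e₁ * (∫ t in (0:ℝ)..(2 * Real.pi), ‖v (cpt r t)‖ ^ 2)
          + e₂ * (∫ t in (0:ℝ)..(2 * Real.pi), ‖w (cpt r t)‖ ^ 2) := by
      rw [intervalIntegral.integral_add (hiv.const_mul e₁) (hiw.const_mul e₂),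
        intervalIntegral.integral_const_mul, intervalIntegral.integral_const_mul]
    rw [hsplit] at hint
    have h2 : (0:ℝ) ≤ (2 * Real.pi)⁻¹ := by positivity
    calc (2 * Real.pi)⁻¹ * ∫ t in (0:ℝ)..(2 * Real.pi), ‖u (cpt r t)‖ ^ 2
        ≤ (2 * Real.pi)⁻¹ * (e₁ * (∫ t in (0:ℝ)..(2 * Real.pi), ‖v (cpt r t)‖ ^ 2)
          + e₂ * (∫ t in (0:ℝ)..(2 * Real.pi), ‖w (cpt r t)‖ ^ 2)) := by
          exact mul_le_mul_of_nonneg_left hint h2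
      _ = e₁ * ((2 * Real.pi)⁻¹ * ∫ t in (0:ℝ)..(2 * Real.pi), ‖v (cpt r t)‖ ^ 2)
          + e₂ * ((2 * Real.pi)⁻¹ * ∫ t in (0:ℝ)..(2 * Real.pi), ‖w (cpt r t)‖ ^ 2) := by ring
  calc ENNReal.ofReal (msq u r) ≤ ENNReal.ofReal (e₁ * msq v r + e₂ * msq w r) :=
        ENNReal.ofReal_le_ofReal key
    _ = ENNReal.ofReal e₁ * ENNReal.ofReal (msq v r)
        + ENNReal.ofReal e₂ * ENNReal.ofReal (msq w r) := by
        rw [ENNReal.ofReal_add (mul_nonneg he₁ (msq_nonneg v r)) (mul_nonneg he₂ (msq_nonneg w r)),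
          ENNReal.ofReal_mul he₁, ENNReal.ofReal_mul he₂]
    _ ≤ ENNReal.ofReal e₁ * h2E v + ENNReal.ofReal e₂ * h2E w := by
        gcongr
        · exact ofReal_msq_le_h2E v ⟨hr0, hr1⟩
        · exact ofReal_msq_le_h2E w ⟨hr0, hr1⟩

lemma h2E_congr {u v : ℂ → ℂ} (h : ∀ z ∈ oDisc, u z = v z) : h2E u = h2E v := by
  rw [h2E_eq, h2E_eq]
  apply iSup_congr
  rintro ⟨r, hr0, hr1⟩
  congr 1
  unfold msq
  congr 1
  apply intervalIntegral.integral_congr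
  intro t _
  simp only
  rw [h _ (cpt_mem_oDisc t hr0.le hr1)]

/-- No nonzero constant is `(z-ζ)·(H² function)` on the disc, for `ζ` on the circle. -/
lemma const_eq_zero {ζ d : ℂ} (hζ : ‖ζ‖ = 1) {k : ℂ → ℂ} (hk2 : h2E k < ⊤)
    (hdk : ∀ z ∈ oDisc, (z - ζ) * k z = d) : d = 0 := by
  by_contra hd
  set B := (h2E k).toReal with hB
  have hBnn : 0 ≤ B := ENNReal.toReal_nonneg
  have hπ : (0:ℝ) < Real.pi := Real.pi_pos
  set θ := ζ.arg with hθ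
  have hζθ : Complex.exp ((θ:ℂ) * Complex.I) = ζ := by
    have h1 := Complex.norm_mul_exp_arg_mul_I ζ
    have h2 : ‖ζ‖ = 1 := hζ
    rw [h2] at h1; simpa using h1
  have hsubne : ∀ t r : ℝ, 0 ≤ r → r < 1 → cpt r t - ζ ≠ 0 := by
    intro t r hr hr1 hc
    rw [sub_eq_zero] at hc
    have : ‖cpt r t‖ = ‖ζ‖ := by rw [hc]
    rw [norm_cpt _ _ hr, hζ] at this
    linarith
  have hdpos : (0:ℝ) < ‖d‖ ^ 2 := pow_pos (norm_pos_iff.mpr hd) 2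
  -- main claim
  have claim : ∀ r : ℝ, 1/2 < r → r < 1 → ‖d‖ ^ 2 ≤ 18 * Real.pi * (1 - r) * B := by
    intro r hr2 hr1
    have hr0 : (0:ℝ) < r := by linarith
    set δ := 1 - r with hδ
    have hδ0 : 0 < δ := by rw [hδ]; linarith
    have hδ2 : δ < 1/2 := by rw [hδ]; linarith
    -- the explicit integrand
    set F : ℝ → ℝ := fun t => ‖d‖ ^ 2 / ‖cpt r t - ζ‖ ^ 2 with hF
    have hFnn : ∀ t, 0 ≤ F t := fun t => by positivity
    have hFeq : ∀ t : ℝ, ‖k (cpt r t)‖ ^ 2 = F t := by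
      intro t
      have hne := hsubne t r hr0.le hr1
      have hk := hdk _ (cpt_mem_oDisc t hr0.le hr1)
      have hkk : k (cpt r t) = d / (cpt r t - ζ) :=
        eq_div_of_mul_eq hne (by rw [mul_comm]; exact hk)
      rw [hF]; rw [hkk, norm_div, div_pow]
    have hFcont : Continuous F := by
      rw [hF]
      apply Continuous.div continuous_const
      · exact (((continuous_cpt r).sub continuous_const).norm).pow 2
      · intro t
        exact pow_ne_zero 2 (norm_ne_zero_iff.mpr (hsubne t r hr0.le hr1))
    -- rewrite the circle mean using F
    have hmsq : msq k r = (2 * Real.pi)⁻¹ * ∫ t in (0:ℝ)..(2 * Real.pi), F t := by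
      unfold msq
      congr 1
      exact intervalIntegral.integral_congr (fun t _ => hFeq t)
    -- periodicity
    have hper : Function.Periodic F (2 * Real.pi) := by
      intro t
      rw [hF]
      have : cpt r (t + 2 * Real.pi) = cpt r t := by
        unfold cpt
        congr 1
        have h1 : ((t + 2 * Real.pi : ℝ) : ℂ) * Complex.I
            = (t:ℂ) * Complex.I + 2 * (Real.pi:ℂ) * Complex.I := by push_cast; ring
        rw [h1, Complex.exp_add, Complex.exp_two_pi_mul_I, mul_one]
      simp only [this]
    have hint1 : (∫ t in (0:ℝ)..(2 * Real.pi), F t) = ∫ t in θ..(θ + 2 * Real.pi), F t := by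
      have := hper.intervalIntegral_add_eq θ 0
      rw [zero_add] at this
      exact this.symm
    -- lower bound on the subinterval [θ, θ+δ]
    have hbound : ∀ t ∈ Set.Icc θ (θ + δ), ‖d‖ ^ 2 / (9 * δ ^ 2) ≤ F t := by
      intro t ht
      have htθ : |t - θ| ≤ δ := by
        rw [abs_le]; constructor <;> [linarith [ht.1]; linarith [ht.2]]
      have hexp : ‖Complex.exp ((t:ℂ)*Complex.I) - Complex.exp ((θ:ℂ)*Complex.I)‖
          ≤ 2 * |t - θ| := by
        have hsplit : Complex.exp ((t:ℂ)*Complex.I) - Complex.exp ((θ:ℂ)*Complex.I)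
            = Complex.exp ((θ:ℂ)*Complex.I) * (Complex.exp (((t-θ:ℝ):ℂ)*Complex.I) - 1) := by
          rw [mul_sub, mul_one, ← Complex.exp_add]; push_cast; ring_nf
        rw [hsplit, norm_mul]
        have h2 : ‖Complex.exp ((θ:ℂ)*Complex.I)‖ = 1 := by
          simp [Complex.norm_exp]
        rw [h2, one_mul]
        have habs : ‖((t-θ:ℝ):ℂ) * Complex.I‖ ≤ 1 := by
          simp only [norm_mul, Complex.norm_I, mul_one, Complex.norm_real, Real.norm_eq_abs]
          linarith
        have := Complex.norm_exp_sub_one_le (x := ((t-θ:ℝ):ℂ)*Complex.I) habs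
        simpa [← Complex.ofReal_sub, Complex.norm_real] using this
      have hdist : ‖cpt r t - ζ‖ ≤ 3 * δ := by
        have hsplit : cpt r t - ζ
            = (r:ℂ) * (Complex.exp ((t:ℂ)*Complex.I) - Complex.exp ((θ:ℂ)*Complex.I))
              + ((r:ℂ) - 1) * Complex.exp ((θ:ℂ)*Complex.I) := by
          rw [← hζθ]; unfold cpt; ring
        rw [hsplit]
        have h1 : ‖(r:ℂ) * (Complex.exp ((t:ℂ)*Complex.I) - Complex.exp ((θ:ℂ)*Complex.I))‖
            ≤ 2 * |t - θ| := by
          rw [norm_mul, Complex.norm_real, Real.norm_eq_abs, _root_.abs_of_nonneg hr0.le]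
          calc r * ‖Complex.exp ((t:ℂ)*Complex.I) - Complex.exp ((θ:ℂ)*Complex.I)‖
              ≤ 1 * (2 * |t - θ|) := by
                apply mul_le_mul hr1.le hexp (norm_nonneg _) zero_le_one
            _ = 2 * |t - θ| := one_mul _
        have h2 : ‖((r:ℂ) - 1) * Complex.exp ((θ:ℂ)*Complex.I)‖ = δ := by
          rw [norm_mul]
          have : ‖Complex.exp ((θ:ℂ)*Complex.I)‖ = 1 := by
            simp [Complex.norm_exp]
          rw [this, mul_one]
          have : (r:ℂ) - 1 = ((r - 1 : ℝ) : ℂ) := by push_cast; ring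
          rw [this, Complex.norm_real, Real.norm_eq_abs, abs_sub_comm, _root_.abs_of_nonneg]
          linarith
        calc ‖_ + _‖ ≤ _ + _ := norm_add_le _ _
          _ ≤ 2 * |t - θ| + δ := by rw [h2]; linarith [h1]
          _ ≤ 3 * δ := by linarith
      rw [hF]
      apply div_le_div_of_nonneg_left hdpos.le
      · exact pow_pos (norm_pos_iff.mpr (hsubne t r hr0.le hr1)) 2
      · calc ‖cpt r t - ζ‖ ^ 2 ≤ (3 * δ) ^ 2 := by
              apply pow_le_pow_left₀ (norm_nonneg _) hdist
          _ = 9 * δ ^ 2 := by ring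
    -- putting the integral bounds together
    have hi1 : IntervalIntegrable F volume θ (θ + δ) := hFcont.intervalIntegrable _ _
    have hi2 : IntervalIntegrable F volume (θ + δ) (θ + 2 * Real.pi) :=
      hFcont.intervalIntegrable _ _
    have hsub : (∫ t in θ..(θ + δ), F t) ≤ ∫ t in θ..(θ + 2 * Real.pi), F t := by
      rw [← intervalIntegral.integral_add_adjacent_intervals hi1 hi2]
      have : 0 ≤ ∫ t in (θ + δ)..(θ + 2 * Real.pi), F t := by
        apply intervalIntegral.integral_nonneg (by linarith [Real.pi_gt_three])
        intro t _; exact hFnn t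
      linarith
    have hlow : δ * (‖d‖ ^ 2 / (9 * δ ^ 2)) ≤ ∫ t in θ..(θ + δ), F t := by
      have := intervalIntegral.integral_mono_on (by linarith : θ ≤ θ + δ)
        (intervalIntegrable_const (c := ‖d‖ ^ 2 / (9 * δ ^ 2)))
        hi1 hbound
      rw [intervalIntegral.integral_const, smul_eq_mul] at this
      calc δ * (‖d‖ ^ 2 / (9 * δ ^ 2)) = (θ + δ - θ) * (‖d‖ ^ 2 / (9 * δ ^ 2)) := by ring
        _ ≤ _ := this
    -- from the sup bound
    have hup : msq k r ≤ B := by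
      have h1 : ENNReal.ofReal (msq k r) ≤ h2E k := ofReal_msq_le_h2E k ⟨hr0, hr1⟩
      rwa [ENNReal.ofReal_le_iff_le_toReal hk2.ne] at h1
    have hmsq_lb : ‖d‖ ^ 2 / (18 * Real.pi * δ) ≤ msq k r := by
      rw [hmsq, hint1]
      have h0 : ‖d‖ ^ 2 / (18 * Real.pi * δ)
          = (2 * Real.pi)⁻¹ * (δ * (‖d‖ ^ 2 / (9 * δ ^ 2))) := by
        field_simp
        ring
      rw [h0]
      apply mul_le_mul_of_nonneg_left _ (by positivity)
      linarith [hsub, hlow]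
    have h18 : 0 < 18 * Real.pi * δ := by positivity
    rw [div_le_iff₀ h18] at hmsq_lb
    calc ‖d‖ ^ 2 ≤ msq k r * (18 * Real.pi * δ) := le_trans hmsq_lb
          (mul_le_mul_of_nonneg_right le_rfl (by positivity))
      _ ≤ B * (18 * Real.pi * δ) := mul_le_mul_of_nonneg_right hup h18.le
      _ = 18 * Real.pi * δ * B := by ring
  -- derive the contradiction
  set ε := min (1/4 : ℝ) (‖d‖ ^ 2 / (18 * Real.pi * (B + 1))) with hε
  have hε0 : 0 < ε := lt_min (by norm_num) (div_pos hdpos (by positivity))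
  have hε4 : ε ≤ 1/4 := min_le_left _ _
  have hεd : ε ≤ ‖d‖ ^ 2 / (18 * Real.pi * (B + 1)) := min_le_right _ _
  have hcl := claim (1 - ε) (by linarith) (by linarith)
  have h1ε : (1:ℝ) - (1 - ε) = ε := by ring
  rw [h1ε] at hcl
  -- ε ≤ d²/(18π(B+1))  ⇒  18πε(B+1) ≤ d² ≤ 18πεB  ⇒  18πε ≤ 0, contradiction
  have h2 : 18 * Real.pi * (B + 1) * ε ≤ ‖d‖ ^ 2 := by
    rw [le_div_iff₀ (by positivity)] at hεd
    linarith [hεd]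
  nlinarith [hπ, hε0]

lemma sub_ne_zero_oDisc {ζ z : ℂ} (hζ : ‖ζ‖ = 1) (hz : z ∈ oDisc) : z - ζ ≠ 0 := by
  intro hc
  rw [sub_eq_zero] at hc
  have : ‖z‖ < 1 := by simpa [oDisc, Metric.mem_ball, dist_eq_norm] using hz
  rw [hc, hζ] at this
  exact lt_irrefl _ this

/-- Any two decompositions of the same function give the same `h2E`. -/
lemma h2E_decomp_unique {ζ : ℂ} (hζ : ‖ζ‖ = 1) {h : ℂ → ℂ} {c₁ c₂ : ℂ} {g₁ g₂ : ℂ → ℂ}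
    (hm1 : MemH2 g₁) (hm2 : MemH2 g₂)
    (hd1 : ∀ z ∈ oDisc, h z = c₁ + (z - ζ) * g₁ z)
    (hd2 : ∀ z ∈ oDisc, h z = c₂ + (z - ζ) * g₂ z) : h2E g₁ = h2E g₂ := by
  have hdk : ∀ z ∈ oDisc, (z - ζ) * (g₂ z - g₁ z) = c₁ - c₂ := by
    intro z hz
    have e1 := hd1 z hz
    have e2 := hd2 z hz
    linear_combination e1 - e2
  have hk2 : h2E (fun z => g₂ z - g₁ z) < ⊤ := by
    have hle := h2E_le (u := fun z => g₂ z - g₁ z) (v := g₂) (w := g₁)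
      (e₁ := 2) (e₂ := 2) (by norm_num) (by norm_num)
      ((hm2.1.sub hm1.1).continuousOn) (hm2.1.continuousOn) (hm1.1.continuousOn)
      (fun z _ => by
        show ‖g₂ z - g₁ z‖ ^ 2 ≤ 2 * ‖g₂ z‖ ^ 2 + 2 * ‖g₁ z‖ ^ 2
        have h1 := norm_sub_le (g₂ z) (g₁ z)
        have h2 : ‖g₂ z - g₁ z‖ ^ 2 ≤ (‖g₂ z‖ + ‖g₁ z‖) ^ 2 :=
          pow_le_pow_left₀ (norm_nonneg _) h1 2
        nlinarith [sq_nonneg (‖g₂ z‖ - ‖g₁ z‖)])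
    refine lt_of_le_of_lt hle ?_
    exact ENNReal.add_lt_top.mpr ⟨ENNReal.mul_lt_top ENNReal.ofReal_lt_top hm2.2,
      ENNReal.mul_lt_top ENNReal.ofReal_lt_top hm1.2⟩
  have hc : c₁ - c₂ = 0 := const_eq_zero hζ hk2 hdk
  apply h2E_congr
  intro z hz
  have := hdk z hz
  rw [hc] at this
  have hne := sub_ne_zero_oDisc hζ hz
  have : g₂ z - g₁ z = 0 := by
    rcases mul_eq_zero.mp this with h' | h'
    · exact absurd h' hne
    · exact h'
  linear_combination -this

lemma Dloc_eq {ζ : ℂ} (hζ : ‖ζ‖ = 1) {h : ℂ → ℂ} {c : ℂ} {g : ℂ → ℂ}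
    (hg : MemH2 g) (hd : ∀ z ∈ oDisc, h z = c + (z - ζ) * g z) : Dloc ζ h = h2E g := by
  have hex : ∃ p : ℂ × (ℂ → ℂ), MemH2 p.2 ∧ ∀ z ∈ oDisc, h z = p.1 + (z - ζ) * p.2 z :=
    ⟨(c, g), hg, hd⟩
  rw [Dloc, dif_pos hex]
  exact h2E_decomp_unique hζ hex.choose_spec.1 hg hex.choose_spec.2 hd

/-- For `ζ ∈ 𝕋`, `φ ∈ H^∞`, `f ∈ D(δ_ζ)` with boundary value `c = f(ζ)`:
`D_ζ(φ f) ≤ 2 (‖φ‖_∞² D_ζ(f) + |f(ζ)|² D_ζ(φ))`. -/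
theorem stmt2 (ζ : ℂ) (hζ : ‖ζ‖ = 1) (φ f g : ℂ → ℂ) (Cφ : ℝ) (c : ℂ)
    (hφa : DifferentiableOn ℂ φ oDisc) (hφb : ∀ z ∈ oDisc, ‖φ z‖ ≤ Cφ)
    (hg : MemH2 g) (hdec : ∀ z ∈ oDisc, f z = c + (z - ζ) * g z) :
    Dloc ζ (fun z => φ z * f z) ≤
      2 * (ENNReal.ofReal (Cφ ^ 2) * Dloc ζ f + ENNReal.ofReal (‖c‖ ^ 2) * Dloc ζ φ) := by
  have h0disc : (0:ℂ) ∈ oDisc := by simp [oDisc]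
  have hCnn : 0 ≤ Cφ := le_trans (norm_nonneg _) (hφb 0 h0disc)
  have hDf : Dloc ζ f = h2E g := Dloc_eq hζ hg hdec
  by_cases hφD : ∃ p : ℂ × (ℂ → ℂ), MemH2 p.2 ∧ ∀ z ∈ oDisc, φ z = p.1 + (z - ζ) * p.2 z
  · obtain ⟨⟨a, k⟩, hk, hφdec⟩ := hφD
    have hDφ : Dloc ζ φ = h2E k := Dloc_eq hζ hk hφdec
    set G : ℂ → ℂ := fun z => φ z * g z + c * k z with hG
    have hGdec : ∀ z ∈ oDisc, φ z * f z = c * a + (z - ζ) * G z := by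
      intro z hz
      simp only [hG]
      rw [hdec z hz, hφdec z hz]
      ring
    have hbnd : ∀ z ∈ oDisc, ‖G z‖ ^ 2 ≤ (2 * Cφ ^ 2) * ‖g z‖ ^ 2 + (2 * ‖c‖ ^ 2) * ‖k z‖ ^ 2 := by
      intro z hz
      have h1 : ‖G z‖ ≤ Cφ * ‖g z‖ + ‖c‖ * ‖k z‖ := by
        rw [hG]
        calc ‖φ z * g z + c * k z‖ ≤ ‖φ z * g z‖ + ‖c * k z‖ := norm_add_le _ _
          _ = ‖φ z‖ * ‖g z‖ + ‖c‖ * ‖k z‖ := by rw [norm_mul, norm_mul]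
          _ ≤ Cφ * ‖g z‖ + ‖c‖ * ‖k z‖ := by
              gcongr
              exact hφb z hz
      have h2 : ‖G z‖ ^ 2 ≤ (Cφ * ‖g z‖ + ‖c‖ * ‖k z‖) ^ 2 :=
        pow_le_pow_left₀ (norm_nonneg _) h1 2
      nlinarith [sq_nonneg (Cφ * ‖g z‖ - ‖c‖ * ‖k z‖)]
    have hGle : h2E G ≤ ENNReal.ofReal (2 * Cφ ^ 2) * h2E g
        + ENNReal.ofReal (2 * ‖c‖ ^ 2) * h2E k :=
      h2E_le (by positivity) (by positivity)
        ((hφa.mul hg.1).add ((differentiableOn_const c).mul hk.1)).continuousOn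
        hg.1.continuousOn hk.1.continuousOn hbnd
    have hGH2 : MemH2 G := by
      refine ⟨(hφa.mul hg.1).add ((differentiableOn_const c).mul hk.1), ?_⟩
      refine lt_of_le_of_lt hGle ?_
      exact ENNReal.add_lt_top.mpr ⟨ENNReal.mul_lt_top ENNReal.ofReal_lt_top hg.2,
        ENNReal.mul_lt_top ENNReal.ofReal_lt_top hk.2⟩
    have hDφf : Dloc ζ (fun z => φ z * f z) = h2E G := Dloc_eq hζ hGH2 hGdec
    rw [hDφf, hDf, hDφ]
    refine le_trans hGle (le_of_eq ?_)
    rw [ENNReal.ofReal_mul (by norm_num : (0:ℝ) ≤ 2), ENNReal.ofReal_mul (by norm_num : (0:ℝ) ≤ 2),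
      ENNReal.ofReal_ofNat]
    ring
  · have hDφ : Dloc ζ φ = ⊤ := by rw [Dloc, dif_neg hφD]
    by_cases hc : c = 0
    · -- f = (z-ζ) g, so φf = (z-ζ)(φg)
      set G : ℂ → ℂ := fun z => φ z * g z with hG
      have hGdec : ∀ z ∈ oDisc, φ z * f z = 0 + (z - ζ) * G z := by
        intro z hz
        rw [hdec z hz, hc, hG]
        ring
      have hbnd : ∀ z ∈ oDisc, ‖G z‖ ^ 2 ≤ (Cφ ^ 2) * ‖g z‖ ^ 2 + 0 * ‖g z‖ ^ 2 := by
        intro z hz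
        have h1 : ‖G z‖ = ‖φ z‖ * ‖g z‖ := norm_mul _ _
        have h2 : ‖φ z‖ ≤ Cφ := hφb z hz
        have h3 : ‖G z‖ ^ 2 = ‖φ z‖ ^ 2 * ‖g z‖ ^ 2 := by rw [h1]; ring
        rw [h3, zero_mul, add_zero]
        apply mul_le_mul_of_nonneg_right _ (by positivity)
        exact pow_le_pow_left₀ (norm_nonneg _) h2 2
      have hGle : h2E G ≤ ENNReal.ofReal (Cφ ^ 2) * h2E g
          + ENNReal.ofReal 0 * h2E g :=
        h2E_le (by positivity) le_rfl (hφa.mul hg.1).continuousOn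
          hg.1.continuousOn hg.1.continuousOn hbnd
      rw [ENNReal.ofReal_zero, zero_mul, add_zero] at hGle
      have hGH2 : MemH2 G := ⟨hφa.mul hg.1, lt_of_le_of_lt hGle
        (ENNReal.mul_lt_top ENNReal.ofReal_lt_top hg.2)⟩
      have hDφf : Dloc ζ (fun z => φ z * f z) = h2E G := Dloc_eq hζ hGH2 hGdec
      rw [hDφf, hDf]
      calc h2E G ≤ ENNReal.ofReal (Cφ ^ 2) * h2E g := hGle
        _ ≤ ENNReal.ofReal (Cφ ^ 2) * h2E g + ENNReal.ofReal (‖c‖ ^ 2) * Dloc ζ φ :=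
            le_self_add
        _ ≤ 2 * (ENNReal.ofReal (Cφ ^ 2) * h2E g + ENNReal.ofReal (‖c‖ ^ 2) * Dloc ζ φ) := by
            rw [two_mul]
            exact le_self_add
    · -- RHS is ⊤
      have h1 : ENNReal.ofReal (‖c‖ ^ 2) ≠ 0 :=
        (ENNReal.ofReal_pos.mpr (pow_pos (norm_pos_iff.mpr hc) 2)).ne'
      rw [hDφ, ENNReal.mul_top h1, add_top,
        ENNReal.mul_top (by norm_num : (2:ℝ≥0∞) ≠ 0)]
      exact le_top
end
end

section
/- Let ζ be on the unit circle, φ ∈ H^∞(𝔻), and f ∈ D(δ_ζ) with f(ζ) = 0. Then φf ∈ D(δ_ζ), (φf)(ζ) = 0, and D_ζ(φf) ≤ ‖φ‖_∞² D_ζ(f). -/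
open Complex MeasureTheory Metric Set Filter
open scoped ENNReal Topology

noncomputable section

/-- For `ζ ∈ 𝕋`, `φ ∈ H^∞`, `f ∈ D(δ_ζ)` with `f(ζ) = 0` (i.e. `f = (z-ζ) g`, `g ∈ H²`):
`φ f ∈ D(δ_ζ)`, `(φ f)(ζ) = 0` and `D_ζ(φ f) ≤ ‖φ‖_∞² D_ζ(f)`. -/
theorem stmt3 (ζ : ℂ) (hζ : ‖ζ‖ = 1) (φ f g : ℂ → ℂ) (Cφ : ℝ)
    (hφa : DifferentiableOn ℂ φ oDisc) (hφb : ∀ z ∈ oDisc, ‖φ z‖ ≤ Cφ)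
    (hg : MemH2 g) (hdec : ∀ z ∈ oDisc, f z = (z - ζ) * g z) :
    ∃ G : ℂ → ℂ, MemH2 G ∧ (∀ z ∈ oDisc, φ z * f z = (z - ζ) * G z) ∧
      h2E G ≤ ENNReal.ofReal (Cφ ^ 2) * h2E g := by
  have hC0 : 0 ≤ Cφ := le_trans (norm_nonneg _) (hφb 0 (by simp [oDisc]))
  have hbound : h2E (fun z => φ z * g z) ≤ ENNReal.ofReal (Cφ ^ 2) * h2E g := by
    apply iSup_le
    rintro ⟨r, hr⟩
    have hmem : ∀ t : ℝ, (r : ℂ) * Complex.exp ((t : ℂ) * Complex.I) ∈ oDisc := by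
      intro t
      simp only [oDisc, Metric.mem_ball, dist_zero_right, norm_mul,
        Complex.norm_exp_ofReal_mul_I, mul_one, Complex.norm_real, Real.norm_eq_abs]
      rw [abs_of_pos hr.1]
      exact hr.2
    have hcont : Continuous fun t : ℝ => (r : ℂ) * Complex.exp ((t : ℂ) * Complex.I) := by
      continuity
    have hgc : Continuous fun t : ℝ => g ((r : ℂ) * Complex.exp ((t : ℂ) * Complex.I)) :=
      hg.1.continuousOn.comp_continuous hcont hmem
    have hφc : Continuous fun t : ℝ => φ ((r : ℂ) * Complex.exp ((t : ℂ) * Complex.I)) :=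
      hφa.continuousOn.comp_continuous hcont hmem
    have hint1 : IntervalIntegrable
        (fun t : ℝ => ‖φ ((r : ℂ) * Complex.exp ((t : ℂ) * Complex.I)) *
          g ((r : ℂ) * Complex.exp ((t : ℂ) * Complex.I))‖ ^ 2)
        MeasureTheory.volume 0 (2 * Real.pi) :=
      (((hφc.mul hgc).norm.pow 2)).intervalIntegrable _ _
    have hint2 : IntervalIntegrable
        (fun t : ℝ => Cφ ^ 2 * ‖g ((r : ℂ) * Complex.exp ((t : ℂ) * Complex.I))‖ ^ 2)
        MeasureTheory.volume 0 (2 * Real.pi) :=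
      (continuous_const.mul ((hgc.norm.pow 2))).intervalIntegrable _ _
    have hle : (∫ t in (0:ℝ)..(2 * Real.pi),
        ‖φ ((r : ℂ) * Complex.exp ((t : ℂ) * Complex.I)) *
          g ((r : ℂ) * Complex.exp ((t : ℂ) * Complex.I))‖ ^ 2) ≤
        ∫ t in (0:ℝ)..(2 * Real.pi),
          Cφ ^ 2 * ‖g ((r : ℂ) * Complex.exp ((t : ℂ) * Complex.I))‖ ^ 2 := by
      apply intervalIntegral.integral_mono_on (by positivity) hint1 hint2
      intro t _
      rw [norm_mul, mul_pow]
      exact mul_le_mul_of_nonneg_right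
        (pow_le_pow_left₀ (norm_nonneg _) (hφb _ (hmem t)) 2) (by positivity)
    have heq : (∫ t in (0:ℝ)..(2 * Real.pi),
        Cφ ^ 2 * ‖g ((r : ℂ) * Complex.exp ((t : ℂ) * Complex.I))‖ ^ 2)
        = Cφ ^ 2 * ∫ t in (0:ℝ)..(2 * Real.pi),
          ‖g ((r : ℂ) * Complex.exp ((t : ℂ) * Complex.I))‖ ^ 2 :=
      intervalIntegral.integral_const_mul _ _
    calc ENNReal.ofReal ((2 * Real.pi)⁻¹ * ∫ t in (0:ℝ)..(2 * Real.pi),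
          ‖(fun z => φ z * g z) ((r : ℂ) * Complex.exp ((t : ℂ) * Complex.I))‖ ^ 2)
        ≤ ENNReal.ofReal (Cφ ^ 2 * ((2 * Real.pi)⁻¹ * ∫ t in (0:ℝ)..(2 * Real.pi),
          ‖g ((r : ℂ) * Complex.exp ((t : ℂ) * Complex.I))‖ ^ 2)) := by
          apply ENNReal.ofReal_le_ofReal
          rw [heq] at hle
          have h2π : (0:ℝ) ≤ (2 * Real.pi)⁻¹ := by positivity
          nlinarith [mul_le_mul_of_nonneg_left hle h2π]
      _ = ENNReal.ofReal (Cφ ^ 2) * ENNReal.ofReal ((2 * Real.pi)⁻¹ *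
          ∫ t in (0:ℝ)..(2 * Real.pi),
            ‖g ((r : ℂ) * Complex.exp ((t : ℂ) * Complex.I))‖ ^ 2) :=
          ENNReal.ofReal_mul (by positivity)
      _ ≤ ENNReal.ofReal (Cφ ^ 2) * h2E g := by
          gcongr
          exact le_iSup (fun r : Set.Ioo (0:ℝ) 1 =>
            ENNReal.ofReal ((2 * Real.pi)⁻¹ * ∫ t in (0:ℝ)..(2 * Real.pi),
              ‖g ((r.1 : ℂ) * Complex.exp ((t : ℂ) * Complex.I))‖ ^ 2)) ⟨r, hr⟩
  refine ⟨fun z => φ z * g z, ⟨hφa.mul hg.1, ?_⟩, ?_, hbound⟩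
  · exact lt_of_le_of_lt hbound
      (ENNReal.mul_lt_top ENNReal.ofReal_lt_top hg.2)
  · intro z hz
    rw [hdec z hz]
    ring
end
end

section
/- Let μ be a finite positive Borel measure on the unit circle with μ({ζ}) = 0 for some fixed ζ ∈ 𝕋. Then H := M(D(μ)) ∩ D(δ_ζ) is an algebra: if f, g ∈ H then fg ∈ H. In particular, using the decompositions f = f(ζ) + (z-ζ)F with F ∈ H²(𝔻), one has fg = (z-ζ)(Fg) + f(ζ)g ∈ D(δ_ζ). -/
open Complex MeasureTheory Metric Set Filter
open scoped ENNReal Topology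

noncomputable section

/-- Membership in the Dirichlet-type space `D(μ)`. -/
def MemDmu (μ : Measure ℂ) (f : ℂ → ℂ) : Prop :=
  DifferentiableOn ℂ f oDisc ∧
  MeasureTheory.IntegrableOn
    (fun z => ‖deriv f z‖ ^ 2 * ∫ w, (1 - ‖z‖ ^ 2) / ‖w - z‖ ^ 2 ∂μ) oDisc

/-- Membership in the multiplier algebra `M(D(μ)) ⊆ H^∞(𝔻)`. -/
def IsMultDmu (μ : Measure ℂ) (φ : ℂ → ℂ) : Prop :=
  MemDmu μ φ ∧ (∃ C : ℝ, ∀ z ∈ oDisc, ‖φ z‖ ≤ C) ∧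
    ∀ f, MemDmu μ f → MemDmu μ (fun z => φ z * f z)

lemma map_mem_oDisc (r : Set.Ioo (0:ℝ) 1) (t : ℝ) :
    (r.1 : ℂ) * Complex.exp ((t : ℂ) * Complex.I) ∈ oDisc := by
  have h1 : ‖Complex.exp ((t:ℂ) * Complex.I)‖ = 1 := by
    rw [Complex.norm_exp]
    simp
  simp only [oDisc, Metric.mem_ball, dist_zero_right, norm_mul, h1, mul_one,
    Complex.norm_real, Real.norm_eq_abs]
  rw [abs_of_pos r.2.1]
  exact r.2.2

lemma cont_circ (F : ℂ → ℂ) (hF : DifferentiableOn ℂ F oDisc) (r : Set.Ioo (0:ℝ) 1) :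
    Continuous fun t : ℝ => F ((r.1:ℂ) * Complex.exp ((t:ℂ) * Complex.I)) := by
  apply hF.continuousOn.comp_continuous
  · exact continuous_const.mul ((Complex.continuous_ofReal.mul continuous_const).cexp)
  · exact fun t => map_mem_oDisc r t

lemma h2E_lin_mul_lt_top (c : ℂ) (G F g : ℂ → ℂ) (C : ℝ)
    (hG : MemH2 G) (hF : MemH2 F) (hgd : DifferentiableOn ℂ g oDisc)
    (hgb : ∀ z ∈ oDisc, ‖g z‖ ≤ C) :
    h2E (fun z => c * G z + F z * g z) < ⊤ := by
  set M : ℝ≥0∞ := ENNReal.ofReal (2*‖c‖^2) * h2E G + ENNReal.ofReal (2*C^2) * h2E F with hMdef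
  have hM : M < ⊤ := by
    apply ENNReal.add_lt_top.2
    constructor
    · exact ENNReal.mul_lt_top ENNReal.ofReal_lt_top hG.2
    · exact ENNReal.mul_lt_top ENNReal.ofReal_lt_top hF.2
  refine lt_of_le_of_lt (iSup_le fun r => ?_) hM
  set φ : ℝ → ℂ := fun t => (r.1:ℂ) * Complex.exp ((t:ℂ) * Complex.I) with hφ
  have hcG : Continuous fun t => ‖G (φ t)‖^2 := ((cont_circ G hG.1 r).norm).pow 2
  have hcF : Continuous fun t => ‖F (φ t)‖^2 := ((cont_circ F hF.1 r).norm).pow 2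
  have hcA : Continuous fun t => ‖c * G (φ t) + F (φ t) * g (φ t)‖^2 := by
    apply Continuous.pow
    apply Continuous.norm
    exact (continuous_const.mul (cont_circ G hG.1 r)).add
      ((cont_circ F hF.1 r).mul (cont_circ g hgd r))
  have hmono : (∫ t in (0:ℝ)..(2*Real.pi), ‖c * G (φ t) + F (φ t) * g (φ t)‖^2)
      ≤ ∫ t in (0:ℝ)..(2*Real.pi), (2*‖c‖^2 * ‖G (φ t)‖^2 + 2*C^2 * ‖F (φ t)‖^2) := by
    apply intervalIntegral.integral_mono_on (by positivity)
      (hcA.intervalIntegrable _ _)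
      (((continuous_const.mul hcG).add (continuous_const.mul hcF)).intervalIntegrable _ _)
    intro t _
    have h1 : ‖c * G (φ t) + F (φ t) * g (φ t)‖ ≤ ‖c‖ * ‖G (φ t)‖ + ‖F (φ t)‖ * ‖g (φ t)‖ := by
      refine le_trans (norm_add_le _ _) ?_
      simp [norm_mul]
    have h2 : ‖g (φ t)‖ ≤ C := hgb _ (map_mem_oDisc r t)
    have h3 : (0:ℝ) ≤ ‖g (φ t)‖ := norm_nonneg _
    have h4 : (0:ℝ) ≤ ‖F (φ t)‖ := norm_nonneg _
    have h5 : (0:ℝ) ≤ ‖c * G (φ t) + F (φ t) * g (φ t)‖ := norm_nonneg _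
    have h6 : ‖c * G (φ t) + F (φ t) * g (φ t)‖^2
        ≤ (‖c‖ * ‖G (φ t)‖ + ‖F (φ t)‖ * ‖g (φ t)‖)^2 := pow_le_pow_left₀ h5 h1 2
    have h7 : ‖g (φ t)‖^2 ≤ C^2 := by nlinarith
    have h8 : ‖F (φ t)‖^2 * ‖g (φ t)‖^2 ≤ ‖F (φ t)‖^2 * C^2 :=
      mul_le_mul_of_nonneg_left h7 (sq_nonneg _)
    show ‖c * G (φ t) + F (φ t) * g (φ t)‖^2 ≤ 2*‖c‖^2 * ‖G (φ t)‖^2 + 2*C^2 * ‖F (φ t)‖^2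
    nlinarith [sq_nonneg (‖c‖ * ‖G (φ t)‖ - ‖F (φ t)‖ * ‖g (φ t)‖)]
  have hsplit : (∫ t in (0:ℝ)..(2*Real.pi), (2*‖c‖^2 * ‖G (φ t)‖^2 + 2*C^2 * ‖F (φ t)‖^2))
      = 2*‖c‖^2 * (∫ t in (0:ℝ)..(2*Real.pi), ‖G (φ t)‖^2)
        + 2*C^2 * (∫ t in (0:ℝ)..(2*Real.pi), ‖F (φ t)‖^2) := by
    rw [intervalIntegral.integral_add (f := fun t => 2*‖c‖^2 * ‖G (φ t)‖^2)
      (g := fun t => 2*C^2 * ‖F (φ t)‖^2) ((continuous_const.mul hcG).intervalIntegrable _ _)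
      ((continuous_const.mul hcF).intervalIntegrable _ _),
      intervalIntegral.integral_const_mul, intervalIntegral.integral_const_mul]
  calc ENNReal.ofReal ((2 * Real.pi)⁻¹ * ∫ t in (0:ℝ)..(2 * Real.pi),
        ‖c * G (φ t) + F (φ t) * g (φ t)‖ ^ 2)
      ≤ ENNReal.ofReal (2*‖c‖^2 * ((2 * Real.pi)⁻¹ * ∫ t in (0:ℝ)..(2*Real.pi), ‖G (φ t)‖^2)
          + 2*C^2 * ((2 * Real.pi)⁻¹ * ∫ t in (0:ℝ)..(2*Real.pi), ‖F (φ t)‖^2)) := by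
        apply ENNReal.ofReal_le_ofReal
        have h2pi : (0:ℝ) ≤ (2*Real.pi)⁻¹ := by positivity
        nlinarith [hmono, hsplit, mul_le_mul_of_nonneg_left (hsplit ▸ hmono) h2pi]
    _ ≤ ENNReal.ofReal (2*‖c‖^2 * ((2 * Real.pi)⁻¹ * ∫ t in (0:ℝ)..(2*Real.pi), ‖G (φ t)‖^2))
          + ENNReal.ofReal (2*C^2 * ((2 * Real.pi)⁻¹ * ∫ t in (0:ℝ)..(2*Real.pi), ‖F (φ t)‖^2)) :=
        ENNReal.ofReal_add_le
    _ ≤ M := by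
        apply add_le_add
        · rw [ENNReal.ofReal_mul (show (0:ℝ) ≤ 2*‖c‖^2 by positivity)]
          exact mul_le_mul_right (le_iSup (fun r : Set.Ioo (0:ℝ) 1 =>
            ENNReal.ofReal ((2 * Real.pi)⁻¹ * ∫ t in (0:ℝ)..(2 * Real.pi),
              ‖G ((r.1 : ℂ) * Complex.exp ((t : ℂ) * Complex.I))‖ ^ 2)) r) _
        · rw [ENNReal.ofReal_mul (show (0:ℝ) ≤ 2*C^2 by positivity)]
          exact mul_le_mul_right (le_iSup (fun r : Set.Ioo (0:ℝ) 1 =>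
            ENNReal.ofReal ((2 * Real.pi)⁻¹ * ∫ t in (0:ℝ)..(2 * Real.pi),
              ‖F ((r.1 : ℂ) * Complex.exp ((t : ℂ) * Complex.I))‖ ^ 2)) r) _

/-- `H := M(D(μ)) ∩ D(δ_ζ)` is an algebra: closed under products. -/
theorem stmt6 (μ : Measure ℂ) [IsFiniteMeasure μ]
    (hμsupp : μ {z : ℂ | ‖z‖ ≠ 1} = 0) (ζ : ℂ) (hζ : ‖ζ‖ = 1) (hμζ : μ {ζ} = 0)
    (f g : ℂ → ℂ)
    (hf : IsMultDmu μ f ∧ MemD ζ f) (hg : IsMultDmu μ g ∧ MemD ζ g) :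
    IsMultDmu μ (fun z => f z * g z) ∧ MemD ζ (fun z => f z * g z) := by
  obtain ⟨⟨hfmem, ⟨Cf, hCf⟩, hfmul⟩, c, F, hF, hfd⟩ := hf
  obtain ⟨⟨hgmem, ⟨Cg, hCg⟩, hgmul⟩, d, G, hG, hgd⟩ := hg
  have h0 : (0:ℂ) ∈ oDisc := by simp [oDisc]
  constructor
  · refine ⟨hfmul g hgmem, ⟨Cf * Cg, fun z hz => ?_⟩, fun h hh => ?_⟩
    · rw [norm_mul]
      exact mul_le_mul (hCf z hz) (hCg z hz) (norm_nonneg _)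
        (le_trans (norm_nonneg _) (hCf 0 h0))
    · have := hfmul (fun z => g z * h z) (hgmul h hh)
      simpa only [mul_assoc] using this
  · refine ⟨c * d, fun z => c * G z + F z * g z, ⟨?_, ?_⟩, fun z hz => ?_⟩
    · exact ((differentiableOn_const c).mul hG.1).add (hF.1.mul hgmem.1)
    · exact h2E_lin_mul_lt_top c G F g Cg hG hF hgmem.1 hCg
    · simp only
      linear_combination (g z) * hfd z hz + c * hgd z hz
end
end

section
/- Let {φ_j}_{j=1}^∞ ⊆ M(D(δ_1)) with Σ_j ‖φ_j‖²_{D(δ_1)} ≤ 1 and sup_{z∈𝔻} Σ_j |φ_j(z)|² ≤ 1, and suppose 0 < ε² ≤ Σ_{j=1}^∞ |φ_j(z)|² for all z ∈ 𝔻. Writing φ_j = φ_j(1) + (z-1)g_j with g_j ∈ H²(𝔻), one has Σ_{j=1}^∞ |φ_j(1)|² ≥ ε²; in particular the boundary value sequence Φ(1) = (φ_1(1), φ_2(1), …) is nonzero. -/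
open Complex MeasureTheory Metric Set Filter
open scoped ENNReal Topology

noncomputable section

/-! ### Auxiliary lemmas -/

/-- Young-type inequality for norms. -/
lemma young_aux (δ : ℝ) (hδ : 0 < δ) (a b : ℂ) :
    ‖a + b‖^2 ≤ (1+δ)*‖a‖^2 + (1+δ⁻¹)*‖b‖^2 := by
  have h1 : δ * δ⁻¹ = 1 := mul_inv_cancel₀ hδ.ne'
  have h2 : 0 ≤ δ⁻¹ := by positivity
  have h3 : ‖a + b‖^2 ≤ (‖a‖ + ‖b‖)^2 :=
    pow_le_pow_left₀ (norm_nonneg _) (norm_add_le a b) 2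
  nlinarith [sq_nonneg (δ*‖a‖ - ‖b‖), norm_nonneg a, norm_nonneg b,
    mul_nonneg (mul_nonneg h2 (norm_nonneg b)) (norm_nonneg b)]

lemma circle_sub_one_aux (r t : ℝ) (hr0 : 0 ≤ r) (hr1 : r ≤ 1) :
    ‖(r:ℂ) * Complex.exp ((t:ℂ) * Complex.I) - 1‖^2 ≤ (1-r)^2 + t^2 := by
  have h1 : ‖(r:ℂ) * Complex.exp ((t:ℂ) * Complex.I) - 1‖^2
      = (r * Real.cos t - 1)^2 + (r * Real.sin t)^2 := by
    rw [Complex.sq_norm, Complex.normSq_apply]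
    simp [Complex.exp_mul_I, ← Complex.ofReal_cos, ← Complex.ofReal_sin]
    ring
  rw [h1]
  have h2 := Real.sin_sq_add_cos_sq t
  have h3 := Real.one_sub_sq_div_two_le_cos (x := t)
  nlinarith [sq_nonneg (r * Real.sin t)]

lemma mem_oDisc_aux (r : ℝ) (hr0 : 0 < r) (hr1 : r < 1) (t : ℝ) :
    (r:ℂ) * Complex.exp ((t:ℂ) * Complex.I) ∈ oDisc := by
  simp [oDisc, Metric.mem_ball, dist_zero_right, Complex.norm_exp_ofReal_mul_I,
    abs_of_pos hr0, hr1]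

lemma cont_comp_aux (f : ℂ → ℂ) (hf : DifferentiableOn ℂ f oDisc) (r : ℝ) (hr0 : 0 < r)
    (hr1 : r < 1) : Continuous fun t : ℝ => f ((r:ℂ) * Complex.exp ((t:ℂ) * Complex.I)) := by
  apply hf.continuousOn.comp_continuous
  · fun_prop
  · exact mem_oDisc_aux r hr0 hr1

lemma circ_bound_aux (f : ℂ → ℂ) (hf : MemH2 f) (r : ℝ) (hr0 : 0 < r) (hr1 : r < 1) :
    ∫⁻ t in Set.Ioo 0 (2*Real.pi), ENNReal.ofReal (‖f ((r:ℂ) * Complex.exp ((t:ℂ) * Complex.I))‖^2)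
      ≤ ENNReal.ofReal (2*Real.pi) * h2E f := by
  have hcont : Continuous fun t : ℝ => ‖f ((r:ℂ) * Complex.exp ((t:ℂ) * Complex.I))‖^2 :=
    ((cont_comp_aux f hf.1 r hr0 hr1).norm).pow 2
  have hint : IntegrableOn (fun t : ℝ => ‖f ((r:ℂ) * Complex.exp ((t:ℂ) * Complex.I))‖^2)
      (Set.Ioc 0 (2*Real.pi)) := hcont.integrableOn_Ioc
  calc ∫⁻ t in Set.Ioo 0 (2*Real.pi),
        ENNReal.ofReal (‖f ((r:ℂ) * Complex.exp ((t:ℂ) * Complex.I))‖^2)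
      ≤ ∫⁻ t in Set.Ioc 0 (2*Real.pi),
        ENNReal.ofReal (‖f ((r:ℂ) * Complex.exp ((t:ℂ) * Complex.I))‖^2) :=
        lintegral_mono_set Set.Ioo_subset_Ioc_self
    _ = ENNReal.ofReal (∫ t in Set.Ioc 0 (2*Real.pi),
        ‖f ((r:ℂ) * Complex.exp ((t:ℂ) * Complex.I))‖^2) :=
        (MeasureTheory.ofReal_integral_eq_lintegral_ofReal hint
          (Filter.Eventually.of_forall fun t => sq_nonneg _)).symm
    _ = ENNReal.ofReal (2*Real.pi) * ENNReal.ofReal ((2 * Real.pi)⁻¹ * ∫ t in (0:ℝ)..(2 * Real.pi),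
        ‖f ((r : ℂ) * Complex.exp ((t : ℂ) * Complex.I))‖ ^ 2) := by
        rw [← ENNReal.ofReal_mul Real.two_pi_pos.le,
          ← intervalIntegral.integral_of_le Real.two_pi_pos.le]
        congr 1
        field_simp
        simp only [mul_comm I]
    _ ≤ ENNReal.ofReal (2*Real.pi) * h2E f := by
        gcongr
        exact le_iSup (fun q : Set.Ioo (0:ℝ) 1 => ENNReal.ofReal ((2 * Real.pi)⁻¹ *
          ∫ t in (0:ℝ)..(2 * Real.pi),
            ‖f ((q.1 : ℂ) * Complex.exp ((t : ℂ) * Complex.I))‖ ^ 2)) ⟨r, hr0, hr1⟩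

/-- If `Σ‖φ_j‖²_{D(δ_1)} ≤ 1`, `Σ|φ_j(z)|² ≤ 1` on `𝔻` and `Σ|φ_j(z)|² ≥ ε² > 0` on `𝔻`,
then the boundary-value sequence satisfies `Σ|φ_j(1)|² ≥ ε²`; in particular it is nonzero. -/
theorem stmt9 (φ g : ℕ → ℂ → ℂ) (c : ℕ → ℂ) (ε : ℝ) (hε : 0 < ε)
    (hH2 : ∀ j, MemH2 (g j))
    (hdec : ∀ j, ∀ z ∈ oDisc, φ j z = c j + (z - 1) * g j z)
    (hsum : (∑' j, (h2E (φ j) + h2E (g j))) ≤ 1)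
    (hup : ∀ z ∈ oDisc, (∑' j, ENNReal.ofReal (‖φ j z‖ ^ 2)) ≤ 1)
    (hlow : ∀ z ∈ oDisc, ENNReal.ofReal (ε ^ 2) ≤ ∑' j, ENNReal.ofReal (‖φ j z‖ ^ 2)) :
    ENNReal.ofReal (ε ^ 2) ≤ (∑' j, ENNReal.ofReal (‖c j‖ ^ 2)) ∧ ∃ j, c j ≠ 0 := by
  set S := ∑' j, ENNReal.ofReal (‖c j‖ ^ 2) with hSdef
  have hT : (∑' j, h2E (g j)) ≤ 1 :=
    le_trans (ENNReal.tsum_le_tsum fun j => le_add_self) hsum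
  have hπ := Real.pi_gt_three
  -- key arc estimate
  have key : ∀ δ L r : ℝ, 0 < δ → 0 < L → L ≤ 1 → 0 < r → r < 1 →
      ENNReal.ofReal L * ENNReal.ofReal (ε^2)
        ≤ ENNReal.ofReal L * (ENNReal.ofReal (1+δ) * S)
          + ENNReal.ofReal ((1+δ⁻¹) * ((1-r)^2 + L^2)) * ENNReal.ofReal (2*Real.pi) := by
    intro δ L r hδ hL0 hL1 hr0 hr1
    set K := (1+δ⁻¹) * ((1-r)^2 + L^2) with hKdef
    have hK0 : 0 ≤ K := by positivity
    set w : ℝ → ℂ := fun t => (r:ℂ) * Complex.exp ((t:ℂ) * Complex.I) with hwdef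
    have hwD : ∀ t, w t ∈ oDisc := mem_oDisc_aux r hr0 hr1
    have hgc : ∀ j, Continuous fun t : ℝ => ENNReal.ofReal (K * ‖g j (w t)‖^2) := by
      intro j
      exact ENNReal.continuous_ofReal.comp
        (continuous_const.mul (((cont_comp_aux (g j) (hH2 j).1 r hr0 hr1).norm).pow 2))
    -- pointwise bound
    have hpt : ∀ t ∈ Set.Ioo (0:ℝ) L, ENNReal.ofReal (ε^2) ≤
        (∑' j, ENNReal.ofReal ((1+δ) * ‖c j‖^2))
          + ∑' j, ENNReal.ofReal (K * ‖g j (w t)‖^2) := by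
      intro t ht
      refine le_trans (hlow (w t) (hwD t)) ?_
      rw [← ENNReal.tsum_add]
      refine ENNReal.tsum_le_tsum fun j => ?_
      rw [hdec j (w t) (hwD t), ← ENNReal.ofReal_add (by positivity) (by positivity)]
      apply ENNReal.ofReal_le_ofReal
      have hb : ‖(w t - 1) * g j (w t)‖^2 ≤ ((1-r)^2 + L^2) * ‖g j (w t)‖^2 := by
        rw [norm_mul, mul_pow]
        have h1 : ‖w t - 1‖^2 ≤ (1-r)^2 + L^2 := by
          refine le_trans (circle_sub_one_aux r t hr0.le hr1.le) ?_
          have := ht.1; have := ht.2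
          nlinarith
        exact mul_le_mul_of_nonneg_right h1 (sq_nonneg _)
      have h2 := young_aux δ hδ (c j) ((w t - 1) * g j (w t))
      have h3 : 0 ≤ (1:ℝ)+δ⁻¹ := by positivity
      nlinarith [mul_le_mul_of_nonneg_left hb h3]
    have hmeas : Measurable fun t : ℝ => (∑' j, ENNReal.ofReal ((1+δ) * ‖c j‖^2))
        + ∑' j, ENNReal.ofReal (K * ‖g j (w t)‖^2) :=
      measurable_const.add (Measurable.ennreal_tsum fun j => (hgc j).measurable)
    have hLπ : Set.Ioo (0:ℝ) L ⊆ Set.Ioo 0 (2*Real.pi) :=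
      Set.Ioo_subset_Ioo le_rfl (by linarith)
    calc ENNReal.ofReal L * ENNReal.ofReal (ε^2)
        = ∫⁻ _ in Set.Ioo (0:ℝ) L, ENNReal.ofReal (ε^2) := by
          rw [setLIntegral_const, Real.volume_Ioo, sub_zero, mul_comm]
      _ ≤ ∫⁻ t in Set.Ioo (0:ℝ) L, ((∑' j, ENNReal.ofReal ((1+δ) * ‖c j‖^2))
            + ∑' j, ENNReal.ofReal (K * ‖g j (w t)‖^2)) :=
          setLIntegral_mono hmeas hpt
      _ = (∑' j, ENNReal.ofReal ((1+δ) * ‖c j‖^2)) * ENNReal.ofReal L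
            + ∑' j, ∫⁻ t in Set.Ioo (0:ℝ) L, ENNReal.ofReal (K * ‖g j (w t)‖^2) := by
          rw [lintegral_add_right _ (Measurable.ennreal_tsum fun j => (hgc j).measurable),
            setLIntegral_const, Real.volume_Ioo, sub_zero,
            lintegral_tsum fun j => ((hgc j).measurable).aemeasurable]
      _ ≤ (∑' j, ENNReal.ofReal ((1+δ) * ‖c j‖^2)) * ENNReal.ofReal L
            + ∑' j, (ENNReal.ofReal K * (ENNReal.ofReal (2*Real.pi) * h2E (g j))) := by
          gcongr with j
          calc ∫⁻ t in Set.Ioo (0:ℝ) L, ENNReal.ofReal (K * ‖g j (w t)‖^2)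
              = ENNReal.ofReal K * ∫⁻ t in Set.Ioo (0:ℝ) L, ENNReal.ofReal (‖g j (w t)‖^2) := by
                simp_rw [ENNReal.ofReal_mul hK0]
                rw [lintegral_const_mul' _ _ ENNReal.ofReal_ne_top]
            _ ≤ ENNReal.ofReal K * ∫⁻ t in Set.Ioo (0:ℝ) (2*Real.pi),
                  ENNReal.ofReal (‖g j (w t)‖^2) := by
                gcongr
            _ ≤ ENNReal.ofReal K * (ENNReal.ofReal (2*Real.pi) * h2E (g j)) := by
                gcongr
                exact circ_bound_aux (g j) (hH2 j) r hr0 hr1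
      _ ≤ ENNReal.ofReal L * (ENNReal.ofReal (1+δ) * S)
            + ENNReal.ofReal K * ENNReal.ofReal (2*Real.pi) := by
          have e1 : (∑' j, ENNReal.ofReal ((1+δ) * ‖c j‖^2)) * ENNReal.ofReal L
              = ENNReal.ofReal L * (ENNReal.ofReal (1+δ) * S) := by
            rw [mul_comm]
            congr 1
            calc (∑' j, ENNReal.ofReal ((1+δ) * ‖c j‖^2))
                = ∑' j, ENNReal.ofReal (1+δ) * ENNReal.ofReal (‖c j‖^2) := by
                  simp_rw [ENNReal.ofReal_mul (by positivity : (0:ℝ) ≤ 1+δ)]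
              _ = ENNReal.ofReal (1+δ) * S := ENNReal.tsum_mul_left
          have e2 : (∑' j, (ENNReal.ofReal K * (ENNReal.ofReal (2*Real.pi) * h2E (g j))))
              ≤ ENNReal.ofReal K * ENNReal.ofReal (2*Real.pi) := by
            calc (∑' j, (ENNReal.ofReal K * (ENNReal.ofReal (2*Real.pi) * h2E (g j))))
                = ENNReal.ofReal K * ENNReal.ofReal (2*Real.pi) * ∑' j, h2E (g j) := by
                  simp_rw [← mul_assoc]
                  exact ENNReal.tsum_mul_left
              _ ≤ ENNReal.ofReal K * ENNReal.ofReal (2*Real.pi) * 1 := by gcongr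
              _ = ENNReal.ofReal K * ENNReal.ofReal (2*Real.pi) := mul_one _
          rw [e1]
          exact add_le_add le_rfl e2
  -- deduce the main inequality
  have main : ENNReal.ofReal (ε ^ 2) ≤ S := by
    by_cases hS : S = ⊤
    · rw [hS]; exact le_top
    have hSr : 0 ≤ S.toReal := ENNReal.toReal_nonneg
    have hreal : ε^2 ≤ S.toReal := by
      apply le_of_forall_pos_le_add
      intro η hη
      set δ := η / (2*(S.toReal+1)) with hδdef
      have hδ : 0 < δ := by positivity
      have hδi : 0 < δ⁻¹ := by positivity
      set L := min 1 (η / (8*Real.pi*(1+δ⁻¹))) with hLdef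
      have hL0 : 0 < L := lt_min one_pos (by positivity)
      have hL1 : L ≤ 1 := min_le_left _ _
      set r := 1 - L/2 with hrdef
      have hr0 : 0 < r := by rw [hrdef]; linarith
      have hr1 : r < 1 := by rw [hrdef]; linarith
      have hkey := key δ L r hδ hL0 hL1 hr0 hr1
      have hfin : ENNReal.ofReal L * (ENNReal.ofReal (1+δ) * S)
          + ENNReal.ofReal ((1+δ⁻¹) * ((1-r)^2 + L^2)) * ENNReal.ofReal (2*Real.pi) ≠ ⊤ := by
        apply ENNReal.add_ne_top.mpr
        exact ⟨ENNReal.mul_ne_top ENNReal.ofReal_ne_top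
            (ENNReal.mul_ne_top ENNReal.ofReal_ne_top hS),
          ENNReal.mul_ne_top ENNReal.ofReal_ne_top ENNReal.ofReal_ne_top⟩
      have htr := ENNReal.toReal_mono hfin hkey
      rw [ENNReal.toReal_mul, ENNReal.toReal_add
          (ENNReal.mul_ne_top ENNReal.ofReal_ne_top
            (ENNReal.mul_ne_top ENNReal.ofReal_ne_top hS))
          (ENNReal.mul_ne_top ENNReal.ofReal_ne_top ENNReal.ofReal_ne_top),
        ENNReal.toReal_mul, ENNReal.toReal_mul, ENNReal.toReal_mul,
        ENNReal.toReal_ofReal hL0.le, ENNReal.toReal_ofReal (by positivity : (0:ℝ) ≤ ε^2),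
        ENNReal.toReal_ofReal (by positivity : (0:ℝ) ≤ 1+δ),
        ENNReal.toReal_ofReal (by positivity : (0:ℝ) ≤ (1+δ⁻¹) * ((1-r)^2 + L^2)),
        ENNReal.toReal_ofReal Real.two_pi_pos.le] at htr
      -- htr : L * ε^2 ≤ L * ((1+δ) * S.toReal) + (1+δ⁻¹)*((1-r)^2+L^2)*(2π)
      have hLb : L ≤ η / (8*Real.pi*(1+δ⁻¹)) := min_le_right _ _
      have hLb' : L * (8*Real.pi*(1+δ⁻¹)) ≤ η := by
        rw [← le_div_iff₀ (by positivity)]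
        exact hLb
      have hδS : δ * S.toReal ≤ η/2 := by
        rw [hδdef, div_mul_eq_mul_div, div_le_div_iff₀ (by positivity) (by norm_num)]
        nlinarith
      have h1r : (1-r)^2 = L^2/4 := by rw [hrdef]; ring
      have h2nd : (1+δ⁻¹) * ((1-r)^2 + L^2) * (2*Real.pi) ≤ L * (η/2) := by
        rw [h1r]
        nlinarith [Real.pi_pos, mul_pos hL0 hL0, hδi.le]
      have hfinal : L * (ε^2) ≤ L * (S.toReal + η) := by nlinarith
      exact le_of_mul_le_mul_left hfinal hL0
    calc ENNReal.ofReal (ε ^ 2) ≤ ENNReal.ofReal S.toReal := ENNReal.ofReal_le_ofReal hreal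
      _ = S := ENNReal.ofReal_toReal hS
  refine ⟨main, ?_⟩
  by_contra h
  push_neg at h
  have hS0 : S = 0 := by
    rw [hSdef]
    simp [h]
  rw [hS0, nonpos_iff_eq_zero, ENNReal.ofReal_eq_zero] at main
  nlinarith
end
end
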